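/- arXiv:2405.09516 — 6 statements merged into one kernel-verified Lean document; each statement's English description precedes it below -/
import Mathlib

section
/- On a probability space (Ω, F, P), let X : Ω → 𝒳, U : Ω → 𝒰, and Y : Ω → ℝ be measurable random variables, let A ∈ F be an event with p := P(A) > 0, and let e := E[1_A | σ(X,U)]. Assume Y and 1_A are conditionally independent given σ(X,U). Let ℓ : ℝ × ℝ → [0,∞) be measurable, h : 𝒳 → ℝ measurable, and let w : 𝒳 → [0,∞) be a bounded measurable weight with E[w(X) | A] = 1. Write L := ℓ(Y, h(X)), assume L is P-square-integrable, and assume Δ := E[(w(X)·e/p − 1)²] < ∞. Then for every λ > 0, E[L] ≤ E[w(X)·L | A] + λ·Δ + Var(L)/(4λ). -/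
/-!
Conditional independence of `Y` and `1_A` given `V = (X, U)` says that, restricted to `A`, the
joint law of `(Y, V)` is its law under `P` reweighted by the propensity `e = P[1_A | V]`. Hence
`E[w(X) L 1_A] = E[w(X) e L]`, so `E[w(X) L | A] = E[g L]` for `g = w(X) e / p`, a density with
`E[g] = 1`. Then `E[L] - E[g L] = E[(1 - g)(L - E[L])]`, and AM-GM bounds the integrand pointwise by
`λ (g - 1)² + (L - E[L])² / (4λ)`.
-/

open MeasureTheory ProbabilityTheory

theorem integral_mul_indicator_one {Ω : Type*} [MeasurableSpace Ω] {μ : Measure Ω} {A : Set Ω}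
    (hA : MeasurableSet A) (f : Ω → ℝ) :
    ∫ ω, f ω * A.indicator (fun _ => (1 : ℝ)) ω ∂μ = ∫ ω in A, f ω ∂μ := by
  rw [← integral_indicator hA]
  congr 1
  ext ω
  by_cases hω : ω ∈ A <;> simp [hω]

theorem integral_le_integral_mul_add_integral_sq_add_variance {Ω : Type*} [MeasurableSpace Ω]
    {P : Measure Ω} [IsProbabilityMeasure P] {g L : Ω → ℝ}
    (hg : Integrable g P) (hg1 : ∫ ω, g ω ∂P = 1) (hL : MemLp L 2 P)
    (hgL : Integrable (fun ω => g ω * L ω) P) (hχ : Integrable (fun ω => (g ω - 1) ^ 2) P)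
    {lam : ℝ} (hlam : 0 < lam) :
    ∫ ω, L ω ∂P
      ≤ ∫ ω, g ω * L ω ∂P + lam * ∫ ω, (g ω - 1) ^ 2 ∂P + variance L P / (4 * lam) := by
  set μ := ∫ ω, L ω ∂P
  have hL1 : Integrable L P := hL.integrable one_le_two
  have hexpand : (fun ω => (1 - g ω) * (L ω - μ))
      = fun ω => (L ω - g ω * L ω) - (μ - μ * g ω) := by
    funext ω; ring
  have hdiff : Integrable (fun ω => L ω - g ω * L ω) P := hL1.sub hgL
  have hconst : Integrable (fun ω => μ - μ * g ω) P := (integrable_const μ).sub (hg.const_mul μ)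
  have hcov : ∫ ω, (1 - g ω) * (L ω - μ) ∂P = μ - ∫ ω, g ω * L ω ∂P := by
    rw [hexpand, integral_sub hdiff hconst, integral_sub hL1 hgL,
      integral_sub (integrable_const μ) (hg.const_mul μ), integral_const_mul, hg1]
    simp [μ]
  have hamgm : ∀ ω, (1 - g ω) * (L ω - μ)
      ≤ lam * (g ω - 1) ^ 2 + (L ω - μ) ^ 2 / (4 * lam) := by
    intro ω
    rw [← sub_le_iff_le_add', le_div_iff₀ (by positivity)]
    nlinarith [sq_nonneg (2 * lam * (1 - g ω) - (L ω - μ))]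
  have hsq : Integrable (fun ω => (L ω - μ) ^ 2) P := (hL.sub (memLp_const μ)).integrable_sq
  have hrhs : Integrable (fun ω => lam * (g ω - 1) ^ 2 + (L ω - μ) ^ 2 / (4 * lam)) P :=
    (hχ.const_mul lam).add (hsq.div_const (4 * lam))
  have hbound := integral_mono (hexpand ▸ hdiff.sub hconst) hrhs hamgm
  rw [hcov, integral_add (hχ.const_mul lam) (hsq.div_const (4 * lam)), integral_const_mul,
    integral_div, ← variance_eq_integral hL.aemeasurable] at hbound
  linarith

section CondIndepReweighting
variable {Ω α β : Type*} {mΩ : MeasurableSpace Ω} [StandardBorelSpace Ω]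
  [MeasurableSpace α] [MeasurableSpace β] {P : Measure Ω} [IsFiniteMeasure P]
  {Y : Ω → α} {V : Ω → β} {A : Set Ω}

lemma measureReal_inter_eq_setIntegral_condExp (hY : Measurable Y) (hV : Measurable V)
    (hA : MeasurableSet A)
    (hind : CondIndepFun (MeasurableSpace.comap V inferInstance) hV.comap_le Y
      (A.indicator fun _ => (1 : ℝ)) P)
    {s : Set α} {t : Set β} (hs : MeasurableSet s) (ht : MeasurableSet t) :
    P.real (Y ⁻¹' s ∩ V ⁻¹' t ∩ A)
      = ∫ ω in Y ⁻¹' s ∩ V ⁻¹' t, (P⟦A | MeasurableSpace.comap V inferInstance⟧) ω ∂P := by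
  set m := MeasurableSpace.comap V inferInstance
  have hm : m ≤ mΩ := hV.comap_le
  have htm : MeasurableSet[m] (V ⁻¹' t) := ⟨t, ht, rfl⟩
  have hsY : MeasurableSet[mΩ] (Y ⁻¹' s) := hY hs
  have hA_pre : (A.indicator fun _ => (1 : ℝ)) ⁻¹' {0}ᶜ = A := by
    ext ω; by_cases hω : ω ∈ A <;> simp [hω]
  have hprod : P⟦Y ⁻¹' s ∩ A | m⟧ =ᵐ[P] P⟦Y ⁻¹' s | m⟧ * P⟦A | m⟧ := by
    have := (condIndepFun_iff_condExp_inter_preimage_eq_mul hY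
      (measurable_const.indicator hA)).mp hind s {0}ᶜ hs (measurableSet_singleton 0).compl
    rwa [hA_pre] at this
  have hmul_indicator : (Y ⁻¹' s).indicator (fun _ => (1 : ℝ)) * P⟦A | m⟧
      = (Y ⁻¹' s).indicator (P⟦A | m⟧) := by
    ext ω; by_cases hω : ω ∈ Y ⁻¹' s <;> simp [hω]
  have hint : Integrable ((Y ⁻¹' s).indicator (fun _ => (1 : ℝ)) * P⟦A | m⟧) P := by
    rw [hmul_indicator]
    exact integrable_condExp.indicator hsY
  have hpull : P[(Y ⁻¹' s).indicator (fun _ => (1 : ℝ)) * P⟦A | m⟧ | m]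
      =ᵐ[P] P⟦Y ⁻¹' s | m⟧ * P⟦A | m⟧ :=
    condExp_mul_of_aestronglyMeasurable_right stronglyMeasurable_condExp.aestronglyMeasurable
      hint ((integrable_const (1 : ℝ)).indicator hsY)
  calc P.real (Y ⁻¹' s ∩ V ⁻¹' t ∩ A)
      = ∫ ω in V ⁻¹' t, (Y ⁻¹' s ∩ A).indicator (fun _ => (1 : ℝ)) ω ∂P := by
        rw [integral_indicator_const _ (hsY.inter hA), measureReal_restrict_apply (hsY.inter hA)]
        simp only [smul_eq_mul, mul_one]
        congr 1
        ext ω; simp only [Set.mem_inter_iff]; tauto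
    _ = ∫ ω in V ⁻¹' t, (P⟦Y ⁻¹' s | m⟧ * P⟦A | m⟧) ω ∂P := by
        rw [← setIntegral_condExp hm ((integrable_const (1 : ℝ)).indicator (hsY.inter hA)) htm]
        exact setIntegral_congr_ae (hm _ htm) (hprod.mono fun ω h _ => h)
    _ = ∫ ω in V ⁻¹' t, ((Y ⁻¹' s).indicator (fun _ => (1 : ℝ)) * P⟦A | m⟧) ω ∂P := by
        rw [← setIntegral_condExp hm hint htm]
        exact setIntegral_congr_ae (hm _ htm) (hpull.mono fun ω h _ => h.symm)
    _ = _ := by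
        rw [hmul_indicator, setIntegral_indicator hsY, Set.inter_comm]

lemma map_restrict_eq_map_withDensity_condExp (hY : Measurable Y) (hV : Measurable V)
    (hA : MeasurableSet A)
    (hind : CondIndepFun (MeasurableSpace.comap V inferInstance) hV.comap_le Y
      (A.indicator fun _ => (1 : ℝ)) P) :
    (P.restrict A).map (fun ω => (Y ω, V ω))
      = (P.withDensity fun ω =>
          ENNReal.ofReal ((P⟦A | MeasurableSpace.comap V inferInstance⟧) ω)).map
            (fun ω => (Y ω, V ω)) := by
  have hZ : Measurable (fun ω => (Y ω, V ω)) := hY.prodMk hV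
  have he0 : 0 ≤ᵐ[P] P⟦A | MeasurableSpace.comap V inferInstance⟧ :=
    condExp_nonneg (ae_of_all _ fun ω => Set.indicator_nonneg (fun _ _ => zero_le_one) ω)
  have hrect : ∀ s t, MeasurableSet s → MeasurableSet t →
      (P.restrict A).map (fun ω => (Y ω, V ω)) (s ×ˢ t)
        = (P.withDensity fun ω =>
            ENNReal.ofReal ((P⟦A | MeasurableSpace.comap V inferInstance⟧) ω)).map
              (fun ω => (Y ω, V ω)) (s ×ˢ t) := by
    intro s t hs ht
    have hB := (hY hs).inter (hV ht)
    rw [Measure.map_apply hZ (hs.prod ht), Measure.map_apply hZ (hs.prod ht), Set.mk_preimage_prod,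
      Measure.restrict_apply hB, withDensity_apply _ hB,
      ← ofReal_integral_eq_lintegral_ofReal integrable_condExp.integrableOn (ae_restrict_of_ae he0),
      ← measureReal_inter_eq_setIntegral_condExp hY hV hA hind hs ht, ofReal_measureReal]
  refine ext_of_generate_finite _ generateFrom_prod.symm isPiSystem_prod ?_ ?_
  · rintro _ ⟨s, hs, t, ht, rfl⟩
    exact hrect s t hs ht
  · rw [← Set.univ_prod_univ]
    exact hrect _ _ .univ .univ

lemma setIntegral_comp_eq_integral_mul_condExp (hY : Measurable Y) (hV : Measurable V)
    (hA : MeasurableSet A)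
    (hind : CondIndepFun (MeasurableSpace.comap V inferInstance) hV.comap_le Y
      (A.indicator fun _ => (1 : ℝ)) P)
    {F : α × β → ℝ} (hF : Measurable F) :
    ∫ ω in A, F (Y ω, V ω) ∂P
      = ∫ ω, F (Y ω, V ω) * (P⟦A | MeasurableSpace.comap V inferInstance⟧) ω ∂P := by
  have hZ : Measurable (fun ω => (Y ω, V ω)) := hY.prodMk hV
  have he0 : 0 ≤ᵐ[P] P⟦A | MeasurableSpace.comap V inferInstance⟧ :=
    condExp_nonneg (ae_of_all _ fun ω => Set.indicator_nonneg (fun _ _ => zero_le_one) ω)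
  have hem : Measurable fun ω => ((P⟦A | MeasurableSpace.comap V inferInstance⟧) ω).toNNReal :=
    (stronglyMeasurable_condExp.mono hV.comap_le).measurable.real_toNNReal
  calc ∫ ω in A, F (Y ω, V ω) ∂P
      = ∫ z, F z ∂(P.restrict A).map (fun ω => (Y ω, V ω)) :=
        (integral_map hZ.aemeasurable hF.aestronglyMeasurable).symm
    _ = ∫ ω, F (Y ω, V ω) ∂P.withDensity
          fun ω => ENNReal.ofReal ((P⟦A | MeasurableSpace.comap V inferInstance⟧) ω) := by
        rw [map_restrict_eq_map_withDensity_condExp hY hV hA hind,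
          integral_map hZ.aemeasurable hF.aestronglyMeasurable]
    _ = ∫ ω, ((P⟦A | MeasurableSpace.comap V inferInstance⟧) ω).toNNReal • F (Y ω, V ω) ∂P :=
        integral_withDensity_eq_integral_smul hem _
    _ = _ := integral_congr_ae (he0.mono fun ω h => by
        simp [NNReal.smul_def, Real.coe_toNNReal _ h, mul_comm])
end CondIndepReweighting

theorem stmt_3_general {Ω 𝓧 𝓤 : Type*} [MeasurableSpace Ω] [StandardBorelSpace Ω]
    [MeasurableSpace 𝓧] [MeasurableSpace 𝓤]
    (P : Measure Ω) [IsProbabilityMeasure P]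
    (X : Ω → 𝓧) (U : Ω → 𝓤) (Y : Ω → ℝ)
    (hX : Measurable X) (hU : Measurable U) (hY : Measurable Y)
    (A : Set Ω) (hA : MeasurableSet A)
    (p : ℝ) (hppos : 0 < p)
    (e : Ω → ℝ)
    (he : e = P[A.indicator (fun _ => (1 : ℝ)) |
      MeasurableSpace.comap (fun ω => (X ω, U ω)) inferInstance])
    (hind : CondIndepFun (MeasurableSpace.comap (fun ω => (X ω, U ω)) inferInstance)
      ((hX.prodMk hU).comap_le) Y (A.indicator fun _ => (1 : ℝ)) P)
    (ℓ : ℝ × ℝ → ℝ) (hℓm : Measurable ℓ)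
    (h : 𝓧 → ℝ) (hh : Measurable h)
    (w : 𝓧 → ℝ) (hwm : Measurable w) (hw0 : ∀ x, 0 ≤ w x) (Cw : ℝ) (hwb : ∀ x, w x ≤ Cw)
    (hw1 : (∫ ω, w (X ω) * A.indicator (fun _ => (1 : ℝ)) ω ∂P) / p = 1)
    (L : Ω → ℝ) (hL : L = fun ω => ℓ (Y ω, h (X ω))) (hL2 : MemLp L 2 P)
    (Δ : ℝ) (hΔ : Δ = ∫ ω, (w (X ω) * e ω / p - 1) ^ 2 ∂P)
    (hΔfin : Integrable (fun ω => (w (X ω) * e ω / p - 1) ^ 2) P)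
    (lam : ℝ) (hlam : 0 < lam) :
    ∫ ω, L ω ∂P
      ≤ (∫ ω, w (X ω) * L ω * A.indicator (fun _ => (1 : ℝ)) ω ∂P) / p
        + lam * Δ + variance L P / (4 * lam) := by
  subst hL
  have hreweight : ∀ F : ℝ × (𝓧 × 𝓤) → ℝ, Measurable F →
      ∫ ω, F (Y ω, (X ω, U ω)) * A.indicator (fun _ => (1 : ℝ)) ω ∂P
        = ∫ ω, F (Y ω, (X ω, U ω)) * e ω ∂P := fun F hF => by
    rw [integral_mul_indicator_one hA,
      setIntegral_comp_eq_integral_mul_condExp hY (hX.prodMk hU) hA hind hF, ← he]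
  have he_bdd : ∀ᵐ ω ∂P, |e ω| ≤ 1 := he ▸ ae_bdd_abs_condExp_of_ae_bdd_abs (R := (1 : ℝ))
    (ae_of_all _ fun ω => by by_cases hω : ω ∈ A <;> simp [hω])
  have hem : Measurable e :=
    he ▸ (stronglyMeasurable_condExp.mono (hX.prodMk hU).comap_le).measurable
  have hgm : AEStronglyMeasurable (fun ω => w (X ω) * e ω / p) P :=
    (((hwm.comp hX).mul hem).div_const p).aestronglyMeasurable
  have hg_bdd : ∀ᵐ ω ∂P, ‖w (X ω) * e ω / p‖ ≤ Cw / p := by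
    filter_upwards [he_bdd] with ω hω
    rw [Real.norm_eq_abs, abs_div, abs_mul, abs_of_nonneg (hw0 _), abs_of_pos hppos]
    gcongr
    exact (mul_le_of_le_one_right (hw0 _) hω).trans (hwb _)
  have hg1 : ∫ ω, w (X ω) * e ω / p ∂P = 1 := by
    rw [integral_div, ← hreweight (fun z => w z.2.1) (hwm.comp measurable_snd.fst), hw1]
  have hgL : ∫ ω, w (X ω) * e ω / p * ℓ (Y ω, h (X ω)) ∂P
      = (∫ ω, w (X ω) * ℓ (Y ω, h (X ω)) * A.indicator (fun _ => (1 : ℝ)) ω ∂P) / p := by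
    rw [hreweight (fun z => w z.2.1 * ℓ (z.1, h z.2.1))
      ((hwm.comp measurable_snd.fst).mul (hℓm.comp (measurable_fst.prodMk
        (hh.comp measurable_snd.fst)))), ← integral_div]
    congr 1
    ext ω
    ring
  have hchange := integral_le_integral_mul_add_integral_sq_add_variance
    (Integrable.of_bound hgm _ hg_bdd) hg1 hL2 ((hL2.integrable one_le_two).bdd_mul hgm hg_bdd)
    hΔfin hlam
  rwa [hgL, ← hΔ] at hchange

/-- upper bound on the outcome regression loss in expectation,
Theorem 2 of the paper. Under conditional independence of `Y` and `1_A` given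
`σ(X,U)`, for a nonnegative measurable loss `ℓ`, measurable `h`, and a bounded
nonnegative weight `w` with `E[w(X) | A] = 1`, writing `L = ℓ(Y, h(X))`
(square-integrable) and `Δ = E[(w(X)·e/p − 1)²] < ∞`, for every `λ > 0` we have
`E[L] ≤ E[w(X)·L | A] + λ·Δ + Var(L)/(4λ)`. -/
theorem stmt_3 {Ω 𝓧 𝓤 : Type*} [MeasurableSpace Ω] [StandardBorelSpace Ω]
    [MeasurableSpace 𝓧] [MeasurableSpace 𝓤]
    (P : Measure Ω) [IsProbabilityMeasure P]
    (X : Ω → 𝓧) (U : Ω → 𝓤) (Y : Ω → ℝ)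
    (hX : Measurable X) (hU : Measurable U) (hY : Measurable Y)
    (A : Set Ω) (hA : MeasurableSet A)
    (p : ℝ) (hp : p = (P A).toReal) (hppos : 0 < p)
    (e : Ω → ℝ)
    (he : e = P[A.indicator (fun _ => (1 : ℝ)) |
      MeasurableSpace.comap (fun ω => (X ω, U ω)) inferInstance])
    (hind : CondIndepFun (MeasurableSpace.comap (fun ω => (X ω, U ω)) inferInstance)
      ((hX.prodMk hU).comap_le) Y (A.indicator fun _ => (1 : ℝ)) P)
    (ℓ : ℝ × ℝ → ℝ) (hℓm : Measurable ℓ) (hℓ0 : ∀ z, 0 ≤ ℓ z)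
    (h : 𝓧 → ℝ) (hh : Measurable h)
    (w : 𝓧 → ℝ) (hwm : Measurable w) (hw0 : ∀ x, 0 ≤ w x) (Cw : ℝ) (hwb : ∀ x, w x ≤ Cw)
    (hw1 : (∫ ω, w (X ω) * A.indicator (fun _ => (1 : ℝ)) ω ∂P) / p = 1)
    (L : Ω → ℝ) (hL : L = fun ω => ℓ (Y ω, h (X ω))) (hL2 : MemLp L 2 P)
    (Δ : ℝ) (hΔ : Δ = ∫ ω, (w (X ω) * e ω / p - 1) ^ 2 ∂P)
    (hΔfin : Integrable (fun ω => (w (X ω) * e ω / p - 1) ^ 2) P)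
    (lam : ℝ) (hlam : 0 < lam) :
    ∫ ω, L ω ∂P
      ≤ (∫ ω, w (X ω) * L ω * A.indicator (fun _ => (1 : ℝ)) ω ∂P) / p
        + lam * Δ + variance L P / (4 * lam) :=
  stmt_3_general P X U Y hX hU hY A hA p hppos e he hind ℓ hℓm h hh w hwm hw0 Cw hwb hw1 L hL hL2 Δ
    hΔ hΔfin lam hlam
end

section
/- On a probability space (Ω, F, P), let X : Ω → 𝒳 and U : Ω → 𝒰 be measurable random variables, let A ∈ F be an event with p := P(A) > 0, and let e := E[1_A | σ(X,U)]. Let w : 𝒳 → [0,∞) be a bounded measurable weight and ν : 𝒳 → ℝ a measurable function such that all expectations below are finite. Then Δ := E[(w(X)·e/p − 1)²] ≤ 2·E[(w(X)/p)²·(ν(X) − 1_A)²] + 2·E[(w(X)·1_A/p − 1)²]. -/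
/-!
The residual `1_A - e` of the conditional expectation `e = E[1_A | σ(X,U)]` is orthogonal to
every σ(X,U)-measurable `g` with `g (1_A - e)` integrable. Hence, for a σ(X,U)-measurable weight
`q ≥ 0` and predictor `n`, the pointwise identity
`q (n - 1_A)² = q (1_A - e)² - 2 q (n - e) (1_A - e) + q (n - e)²` integrates to
`∫ q (1_A - e)² ≤ ∫ q (n - 1_A)²`: `e` minimises the `q`-weighted Brier score.
Taking `q = (w(X)/p)²` and `n = ν(X)`, the relaxed triangle inequality through `w(X) 1_A / p`
bounds `Δ`; the same inequality also makes `q (1_A - e)²` integrable.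
-/

open MeasureTheory ProbabilityTheory

section WeightedBrier

variable {Ω : Type*} {m mΩ : MeasurableSpace Ω} {μ : Measure Ω}

theorem integrable_mul_mul_of_integrable_mul_sq {q a b : Ω → ℝ} (hq0 : ∀ ω, 0 ≤ q ω)
    (hmeas : AEStronglyMeasurable (fun ω => q ω * a ω * b ω) μ)
    (ha : Integrable (fun ω => q ω * a ω ^ 2) μ) (hb : Integrable (fun ω => q ω * b ω ^ 2) μ) :
    Integrable (fun ω => q ω * a ω * b ω) μ :=
  (ha.add hb).mono' hmeas <| ae_of_all _ fun ω => by
    rw [Real.norm_eq_abs, Pi.add_apply, abs_le]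
    constructor <;> nlinarith [mul_nonneg (hq0 ω) (sq_nonneg (a ω + b ω)),
      mul_nonneg (hq0 ω) (sq_nonneg (a ω - b ω)), mul_nonneg (hq0 ω) (sq_nonneg (a ω)),
      mul_nonneg (hq0 ω) (sq_nonneg (b ω))]

theorem MeasureTheory.Integrable.sq_sub_of_sq_sub {a b c : Ω → ℝ} (ha : AEStronglyMeasurable a μ)
    (hb : AEStronglyMeasurable b μ) (hac : Integrable (fun ω => (a ω - c ω) ^ 2) μ)
    (hbc : Integrable (fun ω => (b ω - c ω) ^ 2) μ) :
    Integrable (fun ω => (a ω - b ω) ^ 2) μ :=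
  ((hac.add hbc).const_mul 2).mono' ((ha.sub hb).pow 2) <| ae_of_all _ fun ω => by
    rw [Real.norm_of_nonneg (sq_nonneg _), Pi.add_apply, ← sub_sub_sub_cancel_right _ _ (c ω)]
    nlinarith [sq_nonneg (a ω - c ω + (b ω - c ω))]

theorem integral_sq_sub_le {a b c : Ω → ℝ} (hab : Integrable (fun ω => (a ω - b ω) ^ 2) μ)
    (hbc : Integrable (fun ω => (b ω - c ω) ^ 2) μ)
    (hac : Integrable (fun ω => (a ω - c ω) ^ 2) μ) :
    ∫ ω, (a ω - c ω) ^ 2 ∂μ ≤ 2 * ∫ ω, (a ω - b ω) ^ 2 ∂μ + 2 * ∫ ω, (b ω - c ω) ^ 2 ∂μ := by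
  rw [← integral_const_mul, ← integral_const_mul,
    ← integral_add (hab.const_mul 2) (hbc.const_mul 2)]
  refine integral_mono hac ((hab.const_mul 2).add (hbc.const_mul 2)) fun ω => ?_
  simpa only [sub_add_sub_cancel, mul_add] using add_sq_le (a := a ω - b ω) (b := b ω - c ω)

theorem integral_mul_sub_condExp_eq_zero (hm : m ≤ mΩ) [SigmaFinite (μ.trim hm)] {f g : Ω → ℝ}
    (hf : Integrable f μ) (hg : StronglyMeasurable[m] g)
    (hgf : Integrable (fun ω => g ω * (f ω - μ[f | m] ω)) μ) :
    ∫ ω, g ω * (f ω - μ[f | m] ω) ∂μ = 0 := by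
  have hres : μ[f - μ[f | m] | m] =ᵐ[μ] 0 := by
    filter_upwards [condExp_sub hf integrable_condExp m] with ω hω
    rw [hω, condExp_of_stronglyMeasurable hm stronglyMeasurable_condExp integrable_condExp]
    exact sub_self _
  calc ∫ ω, g ω * (f ω - μ[f | m] ω) ∂μ = ∫ ω, μ[g * (f - μ[f | m]) | m] ω ∂μ :=
        (integral_condExp hm).symm
    _ = ∫ ω, g ω * 0 ∂μ := by
        refine integral_congr_ae ?_
        filter_upwards [condExp_mul_of_stronglyMeasurable_left (g := f - μ[f | m]) hg hgf
          (hf.sub integrable_condExp), hres] with ω h1 h2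
        rw [h1, Pi.mul_apply, h2, Pi.zero_apply]
    _ = 0 := by simp

theorem integral_mul_sq_sub_condExp_le (hm : m ≤ mΩ) [SigmaFinite (μ.trim hm)]
    {f q n : Ω → ℝ} (hf : Integrable f μ) (hq0 : ∀ ω, 0 ≤ q ω) (hq : StronglyMeasurable[m] q)
    (hn : StronglyMeasurable[m] n) (hqn : Integrable (fun ω => q ω * (n ω - f ω) ^ 2) μ)
    (hqe : Integrable (fun ω => q ω * (f ω - μ[f | m] ω) ^ 2) μ) :
    ∫ ω, q ω * (f ω - μ[f | m] ω) ^ 2 ∂μ ≤ ∫ ω, q ω * (n ω - f ω) ^ 2 ∂μ := by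
  set e := μ[f | m]
  have he : AEStronglyMeasurable e μ := integrable_condExp.aestronglyMeasurable
  have hq' : AEStronglyMeasurable q μ := (hq.mono hm).aestronglyMeasurable
  have hn' : AEStronglyMeasurable n μ := (hn.mono hm).aestronglyMeasurable
  have hcross : Integrable (fun ω => q ω * (n ω - e ω) * (f ω - e ω)) μ := by
    -- `q (n - e) (f - e) = q (n - f) (f - e) + q (f - e)²`
    have h := (integrable_mul_mul_of_integrable_mul_sq hq0
      ((hq'.mul (hn'.sub hf.1)).mul (hf.1.sub he)) hqn hqe).add hqe
    exact h.congr (ae_of_all _ fun ω => by simp only [Pi.add_apply, Pi.sub_apply]; ring)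
  have horth : ∫ ω, q ω * (n ω - e ω) * (f ω - e ω) ∂μ = 0 :=
    integral_mul_sub_condExp_eq_zero (g := fun ω => q ω * (n ω - e ω)) hm hf
      (hq.mul (hn.sub stronglyMeasurable_condExp)) hcross
  calc ∫ ω, q ω * (f ω - e ω) ^ 2 ∂μ
        = ∫ ω, (q ω * (f ω - e ω) ^ 2 - 2 * (q ω * (n ω - e ω) * (f ω - e ω))) ∂μ := by
          rw [integral_sub hqe (hcross.const_mul 2), integral_const_mul, horth]; ring
    _ ≤ ∫ ω, q ω * (n ω - f ω) ^ 2 ∂μ :=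
        integral_mono (hqe.sub (hcross.const_mul 2)) hqn fun ω => by
          nlinarith [mul_nonneg (hq0 ω) (sq_nonneg (n ω - e ω))]

end WeightedBrier

theorem stmt_6_general {Ω 𝓧 𝓤 : Type*} [MeasurableSpace Ω]
    [MeasurableSpace 𝓧] [MeasurableSpace 𝓤]
    (P : Measure Ω) [IsProbabilityMeasure P]
    (X : Ω → 𝓧) (U : Ω → 𝓤)
    (hX : Measurable X) (hU : Measurable U)
    (A : Set Ω) (hA : MeasurableSet A)
    (p : ℝ)
    (e : Ω → ℝ)
    (he : e = P[A.indicator (fun _ => (1 : ℝ)) |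
      MeasurableSpace.comap (fun ω => (X ω, U ω)) inferInstance])
    (w : 𝓧 → ℝ) (hwm : Measurable w)
    (ν : 𝓧 → ℝ) (hνm : Measurable ν)
    (Δ : ℝ) (hΔ : Δ = ∫ ω, (w (X ω) * e ω / p - 1) ^ 2 ∂P)
    (hΔfin : Integrable (fun ω => (w (X ω) * e ω / p - 1) ^ 2) P)
    (hfin1 : Integrable
      (fun ω => (w (X ω) / p) ^ 2 * (ν (X ω) - A.indicator (fun _ => (1 : ℝ)) ω) ^ 2) P)
    (hfin2 : Integrable
      (fun ω => (w (X ω) * A.indicator (fun _ => (1 : ℝ)) ω / p - 1) ^ 2) P) :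
    Δ ≤ 2 * ∫ ω, (w (X ω) / p) ^ 2 * (ν (X ω) - A.indicator (fun _ => (1 : ℝ)) ω) ^ 2 ∂P
        + 2 * ∫ ω, (w (X ω) * A.indicator (fun _ => (1 : ℝ)) ω / p - 1) ^ 2 ∂P := by
  have hm : MeasurableSpace.comap (fun ω => (X ω, U ω)) inferInstance ≤ ‹MeasurableSpace Ω› :=
    (hX.prodMk hU).comap_le
  have hXm : ∀ g : 𝓧 → ℝ, Measurable g →
      StronglyMeasurable[MeasurableSpace.comap (fun ω => (X ω, U ω)) inferInstance]
        (fun ω => g (X ω)) :=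
    fun g hg => (hg.comp (measurable_fst.comp (Measurable.of_comap_le le_rfl))).stronglyMeasurable
  have hem : Measurable e := he ▸ (stronglyMeasurable_condExp.mono hm).measurable
  set f := A.indicator (fun _ => (1 : ℝ))
  have hweight : (fun ω => (w (X ω) / p) ^ 2 * (f ω - e ω) ^ 2)
      = fun ω => (w (X ω) * e ω / p - w (X ω) * f ω / p) ^ 2 := funext fun ω => by ring
  have hqe : Integrable (fun ω => (w (X ω) * e ω / p - w (X ω) * f ω / p) ^ 2) P :=
    .sq_sub_of_sq_sub (c := fun _ => 1) (by fun_prop) (by fun_prop) hΔfin hfin2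
  have hbrier := integral_mul_sq_sub_condExp_le hm ((integrable_const (1 : ℝ)).indicator hA)
    (fun ω => sq_nonneg (w (X ω) / p)) (hXm _ (hwm.div_const p |>.pow_const 2)) (hXm ν hνm) hfin1
    (he ▸ hweight ▸ hqe)
  rw [← he, hweight] at hbrier
  rw [hΔ]
  linarith [integral_sq_sub_le (c := fun _ => 1) hqe hfin2 hΔfin]

/-- empirical upper bound on the divergence term, Theorem 3 of the paper.
With `e = P[A | σ(X,U)]` and `p = P(A) > 0`, for any bounded nonnegative measurable weight
`w` and any measurable `ν` (with all expectations finite),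
`Δ = E[(w(X)·e/p − 1)²] ≤ 2·E[(w(X)/p)²·(ν(X) − 1_A)²] + 2·E[(w(X)·1_A/p − 1)²]`. -/
theorem stmt_6 {Ω 𝓧 𝓤 : Type*} [MeasurableSpace Ω]
    [MeasurableSpace 𝓧] [MeasurableSpace 𝓤]
    (P : Measure Ω) [IsProbabilityMeasure P]
    (X : Ω → 𝓧) (U : Ω → 𝓤)
    (hX : Measurable X) (hU : Measurable U)
    (A : Set Ω) (hA : MeasurableSet A)
    (p : ℝ) (hp : p = (P A).toReal) (hppos : 0 < p)
    (e : Ω → ℝ)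
    (he : e = P[A.indicator (fun _ => (1 : ℝ)) |
      MeasurableSpace.comap (fun ω => (X ω, U ω)) inferInstance])
    (w : 𝓧 → ℝ) (hwm : Measurable w) (hw0 : ∀ x, 0 ≤ w x) (Cw : ℝ) (hwb : ∀ x, w x ≤ Cw)
    (ν : 𝓧 → ℝ) (hνm : Measurable ν)
    (Δ : ℝ) (hΔ : Δ = ∫ ω, (w (X ω) * e ω / p - 1) ^ 2 ∂P)
    (hΔfin : Integrable (fun ω => (w (X ω) * e ω / p - 1) ^ 2) P)
    (hfin1 : Integrable
      (fun ω => (w (X ω) / p) ^ 2 * (ν (X ω) - A.indicator (fun _ => (1 : ℝ)) ω) ^ 2) P)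
    (hfin2 : Integrable
      (fun ω => (w (X ω) * A.indicator (fun _ => (1 : ℝ)) ω / p - 1) ^ 2) P) :
    Δ ≤ 2 * ∫ ω, (w (X ω) / p) ^ 2 * (ν (X ω) - A.indicator (fun _ => (1 : ℝ)) ω) ^ 2 ∂P
        + 2 * ∫ ω, (w (X ω) * A.indicator (fun _ => (1 : ℝ)) ω / p - 1) ^ 2 ∂P :=
  stmt_6_general P X U hX hU A hA p e he w hwm ν hνm Δ hΔ hΔfin hfin1 hfin2
end

section
/- For α ∈ (0,1), define pinball_α : ℝ → ℝ by pinball_α(x) := x·α if x ≥ 0 and pinball_α(x) := −x·(1−α) if x < 0, and let C := max{α, 1−α} / min{α, 1−α}. Then for all x, y ∈ ℝ, pinball_α(x + y) ≤ C·(pinball_α(x) + pinball_α(y)) and pinball_α(x − y) ≤ C·(pinball_α(x) + pinball_α(y)). -/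
/-!
`pinball α` is squeezed between `min α (1 - α) * |·|` and `max α (1 - α) * |·|`, so the triangle
inequality for `|·|` transfers to it at the cost of the ratio of the two constants.
-/

/-- The pinball (quantile-loss) function: `pinball α x = x·α` if `x ≥ 0`
and `−x·(1−α)` if `x < 0`. -/
noncomputable def pinball (α x : ℝ) : ℝ := if 0 ≤ x then x * α else -x * (1 - α)

theorem pinball_le_max_mul_abs (α z : ℝ) : pinball α z ≤ max α (1 - α) * |z| := by
  unfold pinball
  split_ifs with hz
  · rw [abs_of_nonneg hz, mul_comm]
    exact mul_le_mul_of_nonneg_right (le_max_left _ _) hz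
  · rw [abs_of_neg (not_le.1 hz), mul_comm]
    exact mul_le_mul_of_nonneg_right (le_max_right _ _) (by linarith)

theorem min_mul_abs_le_pinball (α z : ℝ) : min α (1 - α) * |z| ≤ pinball α z := by
  unfold pinball
  split_ifs with hz
  · rw [abs_of_nonneg hz, mul_comm]
    exact mul_le_mul_of_nonneg_left (min_le_left _ _) hz
  · rw [abs_of_neg (not_le.1 hz), mul_comm]
    exact mul_le_mul_of_nonneg_left (min_le_right _ _) (by linarith)

theorem le_div_mul_add_of_abs_le {f : ℝ → ℝ} {m M : ℝ} (hm : 0 < m)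
    (hlower : ∀ z, m * |z| ≤ f z) (hupper : ∀ z, f z ≤ M * |z|) {x y z : ℝ}
    (hz : |z| ≤ |x| + |y|) : f z ≤ M / m * (f x + f y) := by
  have hM : 0 ≤ M := by
    have h := (hlower 1).trans (hupper 1)
    rw [abs_one, mul_one, mul_one] at h
    linarith
  calc f z ≤ M * |z| := hupper z
    _ ≤ M * (|x| + |y|) := by gcongr
    _ = M / m * (m * |x| + m * |y|) := by field_simp
    _ ≤ M / m * (f x + f y) := by gcongr <;> apply hlower

/-- relaxed subadditivity of the pinball function, i.e. the
α-quantile loss satisfies Assumption 1 with `C = max{α,1−α}/min{α,1−α}`. -/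
theorem stmt_8 (α : ℝ) (hα : α ∈ Set.Ioo (0 : ℝ) 1) (x y : ℝ) :
    pinball α (x + y) ≤ max α (1 - α) / min α (1 - α) * (pinball α x + pinball α y) ∧
    pinball α (x - y) ≤ max α (1 - α) / min α (1 - α) * (pinball α x + pinball α y) := by
  have hmin : 0 < min α (1 - α) := lt_min hα.1 (sub_pos.2 hα.2)
  have key {z : ℝ} (hz : |z| ≤ |x| + |y|) :=
    le_div_mul_add_of_abs_le hmin (min_mul_abs_le_pinball α) (pinball_le_max_mul_abs α) hz
  exact ⟨key (abs_add_le x y), key (abs_sub x y)⟩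
end

section
/- Let ψ : ℝ → [0,∞) satisfy ψ(x + y) ≤ C·(ψ(x) + ψ(y)) and ψ(x − y) ≤ C·(ψ(x) + ψ(y)) for all x, y ∈ ℝ, for some constant C ≥ 1. Let Y¹, Y⁰ be real random variables, X a random variable, and h¹, h⁰, τ¹, τ⁰, e : 𝒳 → ℝ measurable functions, with all quantities below integrable. Then E[ψ(Y¹ − Y⁰ − (e(X)·τ¹(X) + (1−e(X))·τ⁰(X)))] ≤ C²·( E[ψ((1−e(X))·(Y¹ − h¹(X)))] + E[ψ(e(X)·(Y⁰ − h⁰(X)))] + E[ψ(e(X)·(τ¹(X) − (Y¹ − h⁰(X))))] + E[ψ((1−e(X))·(τ⁰(X) − (h¹(X) − Y⁰)))] ). -/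
open MeasureTheory

theorem le_sq_mul_add_of_relaxed_subadditive {ψ : ℝ → ℝ} {C : ℝ} (hC : 0 ≤ C)
    (hadd : ∀ x y : ℝ, ψ (x + y) ≤ C * (ψ x + ψ y))
    (hsub : ∀ x y : ℝ, ψ (x - y) ≤ C * (ψ x + ψ y)) (a b c d : ℝ) :
    ψ (a - b - (c + d)) ≤ C ^ 2 * (ψ a + ψ b + ψ c + ψ d) :=
  calc ψ (a - b - (c + d)) ≤ C * (ψ (a - b) + ψ (c + d)) := hsub _ _
    _ ≤ C * (C * (ψ a + ψ b) + C * (ψ c + ψ d)) := by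
      gcongr
      exacts [hsub a b, hadd c d]
    _ = C ^ 2 * (ψ a + ψ b + ψ c + ψ d) := by ring

theorem xLearner_residual_eq (y1 y0 h1 h0 τ1 τ0 e : ℝ) :
    y1 - y0 - (e * τ1 + (1 - e) * τ0)
      = (1 - e) * (y1 - h1) - e * (y0 - h0)
        - (e * (τ1 - (y1 - h0)) + (1 - e) * (τ0 - (h1 - y0))) := by
  ring

theorem integral_le_mul_integral_add_four {Ω : Type*} [MeasurableSpace Ω] {μ : Measure Ω}
    {f g₁ g₂ g₃ g₄ : Ω → ℝ} (K : ℝ) (hf : Integrable f μ) (hg₁ : Integrable g₁ μ)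
    (hg₂ : Integrable g₂ μ) (hg₃ : Integrable g₃ μ) (hg₄ : Integrable g₄ μ)
    (hle : ∀ ω, f ω ≤ K * (g₁ ω + g₂ ω + g₃ ω + g₄ ω)) :
    ∫ ω, f ω ∂μ ≤ K * ((∫ ω, g₁ ω ∂μ) + (∫ ω, g₂ ω ∂μ) + (∫ ω, g₃ ω ∂μ) + ∫ ω, g₄ ω ∂μ) := by
  have hg₁₂ : Integrable (fun ω => g₁ ω + g₂ ω) μ := hg₁.add hg₂
  have hg₁₂₃ : Integrable (fun ω => g₁ ω + g₂ ω + g₃ ω) μ := hg₁₂.add hg₃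
  calc ∫ ω, f ω ∂μ ≤ ∫ ω, K * (g₁ ω + g₂ ω + g₃ ω + g₄ ω) ∂μ :=
        integral_mono hf ((hg₁₂₃.add hg₄).const_mul K) hle
    _ = K * ((∫ ω, g₁ ω ∂μ) + (∫ ω, g₂ ω ∂μ) + (∫ ω, g₃ ω ∂μ) + ∫ ω, g₄ ω ∂μ) := by
        rw [integral_const_mul, integral_add hg₁₂₃ hg₄, integral_add hg₁₂ hg₃,
          integral_add hg₁ hg₂]

theorem stmt_12_general {Ω 𝓧 : Type*} [MeasurableSpace Ω]
    (P : Measure Ω)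
    (ψ : ℝ → ℝ)
    (C : ℝ) (hC : 1 ≤ C)
    (hadd : ∀ x y : ℝ, ψ (x + y) ≤ C * (ψ x + ψ y))
    (hsub : ∀ x y : ℝ, ψ (x - y) ≤ C * (ψ x + ψ y))
    (Y1 Y0 : Ω → ℝ) (X : Ω → 𝓧)
    (h1 h0 τ1 τ0 e : 𝓧 → ℝ)
    (hintT : Integrable
      (fun ω => ψ (Y1 ω - Y0 ω - (e (X ω) * τ1 (X ω) + (1 - e (X ω)) * τ0 (X ω)))) P)
    (hint1 : Integrable (fun ω => ψ ((1 - e (X ω)) * (Y1 ω - h1 (X ω)))) P)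
    (hint0 : Integrable (fun ω => ψ (e (X ω) * (Y0 ω - h0 (X ω)))) P)
    (hint10 : Integrable (fun ω => ψ (e (X ω) * (τ1 (X ω) - (Y1 ω - h0 (X ω))))) P)
    (hint01 : Integrable (fun ω => ψ ((1 - e (X ω)) * (τ0 (X ω) - (h1 (X ω) - Y0 ω)))) P) :
    ∫ ω, ψ (Y1 ω - Y0 ω - (e (X ω) * τ1 (X ω) + (1 - e (X ω)) * τ0 (X ω))) ∂P
      ≤ C ^ 2 * ((∫ ω, ψ ((1 - e (X ω)) * (Y1 ω - h1 (X ω))) ∂P)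
          + (∫ ω, ψ (e (X ω) * (Y0 ω - h0 (X ω))) ∂P)
          + (∫ ω, ψ (e (X ω) * (τ1 (X ω) - (Y1 ω - h0 (X ω)))) ∂P)
          + ∫ ω, ψ ((1 - e (X ω)) * (τ0 (X ω) - (h1 (X ω) - Y0 ω))) ∂P) := by
  refine integral_le_mul_integral_add_four _ hintT hint1 hint0 hint10 hint01 fun ω => ?_
  rw [xLearner_residual_eq _ _ (h1 (X ω)) (h0 (X ω))]
  exact le_sq_mul_add_of_relaxed_subadditive (by linarith) hadd hsub _ _ _ _

/-- X-learner loss decomposition via relaxed subadditivity.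
If `ψ ≥ 0` satisfies `ψ(x ± y) ≤ C·(ψ(x) + ψ(y))` with `C ≥ 1`, then the complete
X-learner loss is bounded by `C²` times the sum of the four component losses. -/
theorem stmt_12 {Ω 𝓧 : Type*} [MeasurableSpace Ω] [MeasurableSpace 𝓧]
    (P : Measure Ω) [IsProbabilityMeasure P]
    (ψ : ℝ → ℝ) (hψ0 : ∀ x, 0 ≤ ψ x)
    (C : ℝ) (hC : 1 ≤ C)
    (hadd : ∀ x y : ℝ, ψ (x + y) ≤ C * (ψ x + ψ y))
    (hsub : ∀ x y : ℝ, ψ (x - y) ≤ C * (ψ x + ψ y))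
    (Y1 Y0 : Ω → ℝ) (X : Ω → 𝓧)
    (h1 h0 τ1 τ0 e : 𝓧 → ℝ)
    (hh1 : Measurable h1) (hh0 : Measurable h0) (hτ1 : Measurable τ1)
    (hτ0 : Measurable τ0) (he : Measurable e)
    (hintT : Integrable
      (fun ω => ψ (Y1 ω - Y0 ω - (e (X ω) * τ1 (X ω) + (1 - e (X ω)) * τ0 (X ω)))) P)
    (hint1 : Integrable (fun ω => ψ ((1 - e (X ω)) * (Y1 ω - h1 (X ω)))) P)
    (hint0 : Integrable (fun ω => ψ (e (X ω) * (Y0 ω - h0 (X ω)))) P)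
    (hint10 : Integrable (fun ω => ψ (e (X ω) * (τ1 (X ω) - (Y1 ω - h0 (X ω))))) P)
    (hint01 : Integrable (fun ω => ψ ((1 - e (X ω)) * (τ0 (X ω) - (h1 (X ω) - Y0 ω)))) P) :
    ∫ ω, ψ (Y1 ω - Y0 ω - (e (X ω) * τ1 (X ω) + (1 - e (X ω)) * τ0 (X ω))) ∂P
      ≤ C ^ 2 * ((∫ ω, ψ ((1 - e (X ω)) * (Y1 ω - h1 (X ω))) ∂P)
          + (∫ ω, ψ (e (X ω) * (Y0 ω - h0 (X ω))) ∂P)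
          + (∫ ω, ψ (e (X ω) * (τ1 (X ω) - (Y1 ω - h0 (X ω)))) ∂P)
          + ∫ ω, ψ ((1 - e (X ω)) * (τ0 (X ω) - (h1 (X ω) - Y0 ω))) ∂P) :=
  stmt_12_general P ψ C hC hadd hsub Y1 Y0 X h1 h0 τ1 τ0 e hintT hint1 hint0 hint10 hint01
end

section
/- On a probability space (Ω, F, P), let X : Ω → 𝒳, U : Ω → 𝒰, Y¹, Y⁰ : Ω → ℝ be measurable, T : Ω → {0,1} measurable with p_a := P(T=a) > 0 and e_a := E[1_{T=a} | σ(X,U)] for a ∈ {0,1}, and assume for each a that Y^a and 1_{T=a} are conditionally independent given σ(X,U). Let ψ : ℝ → [0,∞) satisfy ψ(x ± y) ≤ C·(ψ(x) + ψ(y)) for all x, y, with ℓ(y,ŷ) := ψ(y − ŷ). Let h¹, h⁰, τ¹, τ⁰ : 𝒳 → ℝ and e : 𝒳 → ℝ be measurable, and w¹, w⁰ : 𝒳 → [0,∞) bounded measurable weights with E[w^a(X) | T=a] = 1. Define L₁ := ψ((1−e(X))(Y¹ − h¹(X))), L₀ := ψ(e(X)(Y⁰ − h⁰(X))), L_{1,0}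 := ψ(e(X)(τ¹(X) − (Y¹ − h⁰(X)))), L_{0,1} := ψ((1−e(X))(τ⁰(X) − (h¹(X) − Y⁰))), all assumed square-integrable, and assume Δ_{T=a} := E[(w^a(X)·e_a/p_a − 1)²] < ∞. Then for all λ₁, λ₀, λ_{1,0}, λ_{0,1} > 0: E[ℓ(Y¹ − Y⁰, e(X)τ¹(X) + (1−e(X))τ⁰(X))] ≤ C²·( E[w¹(X)·L₁ | T=1] + E[w⁰(X)·L₀ | T=0] + E[w¹(X)·L_{1,0} | T=1] + E[w⁰(X)·L_{0,1} | T=0] + (λ₁ + λ_{1,0})·Δ_{T=1} + (λ₀ + λ_{0,1})·Δ_{T=0} + Var(L₁)/(4λ₁) + Var(L₀)/(4λ₀) + Var(L_{1,0})/(4λ_{1,0}) + Var(L_{0,1})/(4λ_{0,1}) ). -/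
/-!
Writing the residual as `(a - b) - (c + d)`, where `a, b, c, d` are the arguments of `ψ` in
`L₁, L₀, L₁₀, L₀₁`, two applications of the quasi-triangle inequality bound the loss pointwise by
`C²(L₁ + L₀ + L₁₀ + L₀₁)`. Each of these losses is a function of `(X, U, Y^a)`, and conditional
independence of `Y^a` and `1_{T=a}` given `(X, U)` gives `E[1_{T=a} | X, U, Y^a] = e_a`. Hence
`E[w^a(X) L 1_{T=a}] / p_a = E[L (1 + g)]` with `g = w^a(X) e_a / p_a - 1`, which has mean zero
by the normalisation of `w^a`. So `E[L] = E[w^a(X) L | T=a] - Cov(L, g)`, and Young's inequality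
`|Cov(L, g)| ≤ λ E[g²] + Var(L) / (4λ)` bounds the covariance by the `χ²` and variance terms.
-/

open MeasureTheory ProbabilityTheory

theorem MeasurableSpace.sup_eq_generateFrom_image2_inter {Ω : Type*} (m₁ m₂ : MeasurableSpace Ω) :
    m₁ ⊔ m₂ = generateFrom
      (Set.image2 (· ∩ ·) {s | MeasurableSet[m₁] s} {s | MeasurableSet[m₂] s}) := by
  refine le_antisymm (sup_le (fun s hs => ?_) (fun s hs => ?_)) (generateFrom_le ?_)
  · exact measurableSet_generateFrom ⟨s, hs, Set.univ, .univ, Set.inter_univ s⟩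
  · exact measurableSet_generateFrom ⟨Set.univ, .univ, s, hs, Set.univ_inter s⟩
  · rintro _ ⟨s₁, hs₁, s₂, hs₂, rfl⟩
    exact (le_sup_left (a := m₁) (b := m₂) s₁ hs₁).inter (le_sup_right (a := m₁) (b := m₂) s₂ hs₂)

theorem isPiSystem_image2_inter_measurableSet {Ω : Type*} (m₁ m₂ : MeasurableSpace Ω) :
    IsPiSystem (Set.image2 (· ∩ ·) {s | MeasurableSet[m₁] s} {s | MeasurableSet[m₂] s}) := by
  rintro _ ⟨s₁, hs₁, s₂, hs₂, rfl⟩ _ ⟨t₁, ht₁, t₂, ht₂, rfl⟩ -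
  exact ⟨s₁ ∩ t₁, hs₁.inter ht₁, s₂ ∩ t₂, hs₂.inter ht₂, Set.inter_inter_inter_comm s₁ t₁ s₂ t₂⟩

theorem abs_mul_le_mul_sq_add_sq_div (a b : ℝ) {lam : ℝ} (hlam : 0 < lam) :
    |a * b| ≤ lam * b ^ 2 + a ^ 2 / (4 * lam) := by
  rw [abs_mul, ← sq_abs a, ← sq_abs b]
  have := sq_nonneg (|a| - 2 * lam * |b|)
  rw [← sub_nonneg]
  field_simp
  nlinarith

theorem apply_sub_sub_add_le {ψ : ℝ → ℝ} {C : ℝ} (hC : 0 ≤ C)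
    (hadd : ∀ x y, ψ (x + y) ≤ C * (ψ x + ψ y)) (hsub : ∀ x y, ψ (x - y) ≤ C * (ψ x + ψ y))
    (a b c d : ℝ) : ψ (a - b - (c + d)) ≤ C ^ 2 * (ψ a + ψ b + ψ c + ψ d) :=
  calc ψ (a - b - (c + d)) ≤ C * (ψ (a - b) + ψ (c + d)) := hsub _ _
    _ ≤ C * (C * (ψ a + ψ b) + C * (ψ c + ψ d)) := by gcongr; exacts [hsub a b, hadd c d]
    _ = C ^ 2 * (ψ a + ψ b + ψ c + ψ d) := by ring

namespace MeasureTheory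

variable {Ω : Type*} {mΩ : MeasurableSpace Ω} {μ : Measure Ω}

theorem abs_integral_mul_le {f g : Ω → ℝ} (hf : MemLp f 2 μ) (hg : MemLp g 2 μ) {lam : ℝ}
    (hlam : 0 < lam) :
    |∫ ω, f ω * g ω ∂μ| ≤ lam * ∫ ω, g ω ^ 2 ∂μ + (∫ ω, f ω ^ 2 ∂μ) / (4 * lam) :=
  calc |∫ ω, f ω * g ω ∂μ| ≤ ∫ ω, |f ω * g ω| ∂μ := abs_integral_le_integral_abs
    _ ≤ ∫ ω, (lam * g ω ^ 2 + f ω ^ 2 / (4 * lam)) ∂μ :=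
      integral_mono (hf.integrable_mul hg).abs
        ((hg.integrable_sq.const_mul lam).add (hf.integrable_sq.div_const _))
        fun ω => abs_mul_le_mul_sq_add_sq_div _ _ hlam
    _ = lam * ∫ ω, g ω ^ 2 ∂μ + (∫ ω, f ω ^ 2 ∂μ) / (4 * lam) := by
      rw [integral_add (hg.integrable_sq.const_mul lam) (hf.integrable_sq.div_const _),
        integral_const_mul, integral_div]

theorem integral_comp_sub_sub_add_le {ψ : ℝ → ℝ} {C : ℝ} (hC : 0 ≤ C) (hψ0 : ∀ x, 0 ≤ ψ x)
    (hadd : ∀ x y, ψ (x + y) ≤ C * (ψ x + ψ y)) (hsub : ∀ x y, ψ (x - y) ≤ C * (ψ x + ψ y))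
    {a b c d : Ω → ℝ} (ha : Integrable (fun ω => ψ (a ω)) μ)
    (hb : Integrable (fun ω => ψ (b ω)) μ) (hc : Integrable (fun ω => ψ (c ω)) μ)
    (hd : Integrable (fun ω => ψ (d ω)) μ) :
    ∫ ω, ψ (a ω - b ω - (c ω + d ω)) ∂μ ≤ C ^ 2 * (∫ ω, ψ (a ω) ∂μ + ∫ ω, ψ (b ω) ∂μ
      + ∫ ω, ψ (c ω) ∂μ + ∫ ω, ψ (d ω) ∂μ) := by
  have hab : Integrable (fun ω => ψ (a ω) + ψ (b ω)) μ := ha.add hb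
  have habc : Integrable (fun ω => ψ (a ω) + ψ (b ω) + ψ (c ω)) μ := hab.add hc
  rw [← integral_add ha hb, ← integral_add hab hc, ← integral_add habc hd, ← integral_const_mul]
  exact integral_mono_of_nonneg (ae_of_all _ fun _ => hψ0 _) ((habc.add hd).const_mul _)
    (ae_of_all _ fun ω => apply_sub_sub_add_le hC hadd hsub _ _ _ _)

end MeasureTheory

namespace ProbabilityTheory

variable {Ω β : Type*} {m' mΩ : MeasurableSpace Ω} [StandardBorelSpace Ω] {hm' : m' ≤ mΩ}
  {μ : Measure Ω} [MeasurableSpace β] {Z : Ω → β} {S : Set Ω}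

theorem setIntegral_inter_preimage_indicator_eq_condExp [IsFiniteMeasure μ] (hS : MeasurableSet S)
    (hZ : Measurable Z)
    (hind : CondIndepFun m' hm' Z (S.indicator fun _ => (1 : ℝ)) μ)
    {t₁ : Set Ω} (ht₁ : MeasurableSet[m'] t₁) {t₂ : Set β} (ht₂ : MeasurableSet t₂) :
    ∫ ω in t₁ ∩ Z ⁻¹' t₂, S.indicator (fun _ => (1 : ℝ)) ω ∂μ
      = ∫ ω in t₁ ∩ Z ⁻¹' t₂, (μ⟦S | m'⟧) ω ∂μ := by
  have hZt₂ : MeasurableSet (Z ⁻¹' t₂) := hZ ht₂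
  have hpre : (S.indicator fun _ => (1 : ℝ)) ⁻¹' {1} = S := by
    ext ω; by_cases h : ω ∈ S <;> simp [h]
  have hprod : μ⟦Z ⁻¹' t₂ ∩ S | m'⟧ =ᵐ[μ] μ⟦Z ⁻¹' t₂ | m'⟧ * μ⟦S | m'⟧ := by
    have := (condIndepFun_iff_condExp_inter_preimage_eq_mul hZ
      (measurable_const.indicator hS)).mp hind t₂ {1} ht₂ (measurableSet_singleton 1)
    rwa [hpre] at this
  have hind_mul : (Z ⁻¹' t₂).indicator (fun _ => (1 : ℝ)) * μ⟦S | m'⟧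
      = (Z ⁻¹' t₂).indicator (μ⟦S | m'⟧) := by
    ext ω; by_cases h : ω ∈ Z ⁻¹' t₂ <;> simp [h]
  have hint : Integrable ((Z ⁻¹' t₂).indicator (fun _ => (1 : ℝ)) * μ⟦S | m'⟧) μ := by
    rw [hind_mul]; exact integrable_condExp.indicator hZt₂
  have hpull : μ[(Z ⁻¹' t₂).indicator (fun _ => (1 : ℝ)) * μ⟦S | m'⟧ | m']
      =ᵐ[μ] μ⟦Z ⁻¹' t₂ | m'⟧ * μ⟦S | m'⟧ :=
    condExp_mul_of_stronglyMeasurable_right stronglyMeasurable_condExp hint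
      ((integrable_const 1).indicator hZt₂)
  calc ∫ ω in t₁ ∩ Z ⁻¹' t₂, S.indicator (fun _ => (1 : ℝ)) ω ∂μ
      = ∫ ω in t₁, (μ⟦Z ⁻¹' t₂ ∩ S | m'⟧) ω ∂μ := by
        rw [setIntegral_condExp hm' ((integrable_const 1).indicator (hZt₂.inter hS)) ht₁,
          ← Set.indicator_indicator, setIntegral_indicator hZt₂]
    _ = ∫ ω in t₁, μ[(Z ⁻¹' t₂).indicator (fun _ => (1 : ℝ)) * μ⟦S | m'⟧ | m'] ω ∂μ :=
        setIntegral_congr_ae (hm' _ ht₁) ((hprod.trans hpull.symm).mono fun _ h _ => h)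
    _ = ∫ ω in t₁, ((Z ⁻¹' t₂).indicator (fun _ => (1 : ℝ)) * μ⟦S | m'⟧) ω ∂μ :=
        setIntegral_condExp hm' hint ht₁
    _ = ∫ ω in t₁ ∩ Z ⁻¹' t₂, (μ⟦S | m'⟧) ω ∂μ := by
        rw [hind_mul, setIntegral_indicator hZt₂]

theorem setIntegral_indicator_eq_setIntegral_condExp_of_condIndepFun [IsFiniteMeasure μ]
    (hS : MeasurableSet S) (hZ : Measurable Z)
    (hind : CondIndepFun m' hm' Z (S.indicator fun _ => (1 : ℝ)) μ)
    {s : Set Ω} (hs : MeasurableSet[m' ⊔ MeasurableSpace.comap Z inferInstance] s) :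
    ∫ ω in s, S.indicator (fun _ => (1 : ℝ)) ω ∂μ = ∫ ω in s, (μ⟦S | m'⟧) ω ∂μ := by
  have hle : m' ⊔ MeasurableSpace.comap Z inferInstance ≤ mΩ := sup_le hm' hZ.comap_le
  have h1S : Integrable (S.indicator fun _ => (1 : ℝ)) μ := (integrable_const 1).indicator hS
  induction s, hs using MeasurableSpace.induction_on_inter
    (MeasurableSpace.sup_eq_generateFrom_image2_inter _ _)
    (isPiSystem_image2_inter_measurableSet _ _) with
  | empty => simp
  | basic t ht =>
    obtain ⟨t₁, ht₁, _, ⟨t₂, ht₂, rfl⟩, rfl⟩ := ht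
    exact setIntegral_inter_preimage_indicator_eq_condExp hS hZ hind ht₁ ht₂
  | compl t ht iht =>
    have h₁ := integral_add_compl (hle t ht) h1S
    have h₂ := integral_add_compl (hle t ht) (integrable_condExp (m := m') (μ := μ)
      (f := S.indicator fun _ => (1 : ℝ)))
    rw [integral_condExp hm'] at h₂
    linarith
  | iUnion f hdisj hf ihf =>
    rw [integral_iUnion (fun i => hle _ (hf i)) hdisj h1S.integrableOn,
      integral_iUnion (fun i => hle _ (hf i)) hdisj integrable_condExp.integrableOn]
    exact tsum_congr ihf

theorem condExp_indicator_sup_comap_ae_eq [IsFiniteMeasure μ] (hS : MeasurableSet S)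
    (hZ : Measurable Z)
    (hind : CondIndepFun m' hm' Z (S.indicator fun _ => (1 : ℝ)) μ) :
    μ⟦S | m' ⊔ MeasurableSpace.comap Z inferInstance⟧ =ᵐ[μ] μ⟦S | m'⟧ := by
  have hEm : StronglyMeasurable[m' ⊔ MeasurableSpace.comap Z inferInstance] (μ⟦S | m'⟧) :=
    stronglyMeasurable_condExp.mono le_sup_left
  exact (ae_eq_condExp_of_forall_setIntegral_eq (sup_le hm' hZ.comap_le)
    ((integrable_const 1).indicator hS) (fun _ _ _ => integrable_condExp.integrableOn)
    (fun _ hs _ =>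
      (setIntegral_indicator_eq_setIntegral_condExp_of_condIndepFun hS hZ hind hs).symm)
    hEm.aestronglyMeasurable).symm

theorem integral_mul_indicator_eq_integral_mul_condExp [IsFiniteMeasure μ] (hS : MeasurableSet S)
    (hZ : Measurable Z) (hind : CondIndepFun m' hm' Z (S.indicator fun _ => (1 : ℝ)) μ)
    {G : Ω → ℝ} (hGm : StronglyMeasurable[m' ⊔ MeasurableSpace.comap Z inferInstance] G)
    (hG : Integrable G μ) :
    ∫ ω, G ω * S.indicator (fun _ => (1 : ℝ)) ω ∂μ = ∫ ω, G ω * (μ⟦S | m'⟧) ω ∂μ := by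
  have hle : m' ⊔ MeasurableSpace.comap Z inferInstance ≤ mΩ := sup_le hm' hZ.comap_le
  have hGS : Integrable (G * S.indicator fun _ => (1 : ℝ)) μ := by
    refine (hG.indicator hS).congr (ae_of_all _ fun ω => ?_)
    by_cases h : ω ∈ S <;> simp [h]
  calc ∫ ω, G ω * S.indicator (fun _ => (1 : ℝ)) ω ∂μ
      = ∫ ω, μ[G * S.indicator (fun _ => (1 : ℝ)) | m' ⊔ MeasurableSpace.comap Z inferInstance] ω
          ∂μ :=
        (integral_condExp hle).symm
    _ = ∫ ω, G ω * (μ⟦S | m' ⊔ MeasurableSpace.comap Z inferInstance⟧) ω ∂μ :=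
        integral_congr_ae (condExp_mul_of_stronglyMeasurable_left hGm hGS
          ((integrable_const 1).indicator hS))
    _ = ∫ ω, G ω * (μ⟦S | m'⟧) ω ∂μ :=
        integral_congr_ae
          ((Filter.EventuallyEq.refl _ G).mul (condExp_indicator_sup_comap_ae_eq hS hZ hind))

theorem integral_le_weighted_integral_add_chiSq_add_variance [IsProbabilityMeasure μ]
    (hS : MeasurableSet S) (hZ : Measurable Z)
    (hind : CondIndepFun m' hm' Z (S.indicator fun _ => (1 : ℝ)) μ)
    {W L : Ω → ℝ} {Cw p lam : ℝ} (hWm : Measurable[m'] W) (hWb : ∀ᵐ ω ∂μ, ‖W ω‖ ≤ Cw)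
    (hLm : Measurable[m' ⊔ MeasurableSpace.comap Z inferInstance] L) (hL : MemLp L 2 μ)
    (hW1 : (∫ ω, W ω * S.indicator (fun _ => (1 : ℝ)) ω ∂μ) / p = 1)
    (hΔ : Integrable (fun ω => (W ω * (μ⟦S | m'⟧) ω / p - 1) ^ 2) μ) (hlam : 0 < lam) :
    ∫ ω, L ω ∂μ ≤ (∫ ω, W ω * L ω * S.indicator (fun _ => (1 : ℝ)) ω ∂μ) / p
      + lam * ∫ ω, (W ω * (μ⟦S | m'⟧) ω / p - 1) ^ 2 ∂μ + variance L μ / (4 * lam) := by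
  set E := μ⟦S | m'⟧
  set g : Ω → ℝ := fun ω => W ω * E ω / p - 1
  set c := ∫ ω, L ω ∂μ
  have hp : p ≠ 0 := by rintro rfl; simp at hW1
  have hle : m' ≤ m' ⊔ MeasurableSpace.comap Z inferInstance := le_sup_left
  have hWm₀ : Measurable W := hWm.mono hm' le_rfl
  have hLm₀ : Measurable L := hLm.mono (sup_le hm' hZ.comap_le) le_rfl
  have hW : Integrable W μ := (integrable_const Cw).mono' hWm₀.aestronglyMeasurable hWb
  have hLint : Integrable L μ := hL.integrable one_le_two
  have hWL : Integrable (fun ω => W ω * L ω) μ := hLint.bdd_mul hWm₀.aestronglyMeasurable hWb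
  have hg : MemLp g 2 μ := (memLp_two_iff_integrable_sq
    ((hWm₀.mul (stronglyMeasurable_condExp.mono hm').measurable).div_const p
      |>.sub_const 1).aestronglyMeasurable).2 hΔ
  have hLc : MemLp (fun ω => L ω - c) 2 μ := hL.sub (memLp_const c)
  have hg_mean : ∫ ω, g ω ∂μ = 0 := by
    have hWE : Integrable (fun ω => W ω * E ω / p) μ :=
      (hg.integrable one_le_two).add (integrable_const 1)
        |>.congr (ae_of_all _ fun ω => by simp [g])
    rw [integral_sub hWE (integrable_const 1), integral_div,
      ← integral_mul_indicator_eq_integral_mul_condExp hS hZ hind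
        (hWm.mono hle le_rfl).stronglyMeasurable hW, hW1]
    simp
  have hsplit : (∫ ω, W ω * L ω * S.indicator (fun _ => (1 : ℝ)) ω ∂μ) / p
      = c + ∫ ω, (L ω - c) * g ω ∂μ := by
    rw [integral_mul_indicator_eq_integral_mul_condExp (G := fun ω => W ω * L ω) hS hZ hind
      ((hWm.mono hle le_rfl).mul hLm).stronglyMeasurable hWL, ← integral_div]
    calc ∫ ω, W ω * L ω * E ω / p ∂μ = ∫ ω, ((L ω - c) * g ω + L ω + c * g ω) ∂μ :=
          integral_congr_ae (ae_of_all _ fun ω => by simp only [g]; field_simp; ring)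
      _ = c + ∫ ω, (L ω - c) * g ω ∂μ := by
          have hLcg : Integrable (fun ω => (L ω - c) * g ω) μ := hLc.integrable_mul hg
          rw [integral_add (f := fun ω => (L ω - c) * g ω + L ω) (hLcg.add hLint)
              ((hg.integrable one_le_two).const_mul c),
            integral_add hLcg hLint, integral_const_mul, hg_mean]
          ring
  have hvar : variance L μ = ∫ ω, (L ω - c) ^ 2 ∂μ := variance_eq_integral hLm₀.aemeasurable
  rw [hsplit, hvar]
  linarith [neg_abs_le (∫ ω, (L ω - c) * g ω ∂μ), abs_integral_mul_le hLc hg hlam]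

end ProbabilityTheory

theorem stmt_13_general {Ω 𝓧 𝓤 : Type*} [MeasurableSpace Ω] [StandardBorelSpace Ω]
    [MeasurableSpace 𝓧] [MeasurableSpace 𝓤]
    (P : Measure Ω) [IsProbabilityMeasure P]
    (X : Ω → 𝓧) (U : Ω → 𝓤) (Y : Bool → Ω → ℝ)
    (hX : Measurable X) (hU : Measurable U) (hY : ∀ b, Measurable (Y b))
    (T : Ω → Bool) (hT : Measurable T)
    (A : Bool → Set Ω) (hA : A = fun b => {ω | T ω = b})
    (p : Bool → ℝ)
    (eps : Bool → Ω → ℝ)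
    (heps : ∀ b, eps b = P[(A b).indicator (fun _ => (1 : ℝ)) |
      MeasurableSpace.comap (fun ω => (X ω, U ω)) inferInstance])
    (hind : ∀ b, CondIndepFun (MeasurableSpace.comap (fun ω => (X ω, U ω)) inferInstance)
      ((hX.prodMk hU).comap_le) (Y b) ((A b).indicator fun _ => (1 : ℝ)) P)
    (ψ : ℝ → ℝ) (hψ0 : ∀ x, 0 ≤ ψ x) (hψm : Measurable ψ)
    (C : ℝ) (hC : 0 < C)
    (hadd : ∀ x y : ℝ, ψ (x + y) ≤ C * (ψ x + ψ y))
    (hsub : ∀ x y : ℝ, ψ (x - y) ≤ C * (ψ x + ψ y))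
    (h : Bool → 𝓧 → ℝ) (hh : ∀ b, Measurable (h b))
    (τ : Bool → 𝓧 → ℝ) (hτ : ∀ b, Measurable (τ b))
    (e : 𝓧 → ℝ) (he : Measurable e)
    (w : Bool → 𝓧 → ℝ) (hwm : ∀ b, Measurable (w b)) (hw0 : ∀ b x, 0 ≤ w b x)
    (Cw : ℝ) (hwb : ∀ b x, w b x ≤ Cw)
    (hw1 : ∀ b, (∫ ω, w b (X ω) * (A b).indicator (fun _ => (1 : ℝ)) ω ∂P) / p b = 1)
    (L1 L0 L10 L01 : Ω → ℝ)
    (hL1 : L1 = fun ω => ψ ((1 - e (X ω)) * (Y true ω - h true (X ω))))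
    (hL0 : L0 = fun ω => ψ (e (X ω) * (Y false ω - h false (X ω))))
    (hL10 : L10 = fun ω => ψ (e (X ω) * (τ true (X ω) - (Y true ω - h false (X ω)))))
    (hL01 : L01 = fun ω => ψ ((1 - e (X ω)) * (τ false (X ω) - (h true (X ω) - Y false ω))))
    (hL1sq : MemLp L1 2 P) (hL0sq : MemLp L0 2 P)
    (hL10sq : MemLp L10 2 P) (hL01sq : MemLp L01 2 P)
    (Δ : Bool → ℝ) (hΔ : ∀ b, Δ b = ∫ ω, (w b (X ω) * eps b ω / p b - 1) ^ 2 ∂P)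
    (hΔfin : ∀ b, Integrable (fun ω => (w b (X ω) * eps b ω / p b - 1) ^ 2) P)
    (lam1 lam0 lam10 lam01 : ℝ)
    (hlam1 : 0 < lam1) (hlam0 : 0 < lam0) (hlam10 : 0 < lam10) (hlam01 : 0 < lam01) :
    ∫ ω, ψ (Y true ω - Y false ω
        - (e (X ω) * τ true (X ω) + (1 - e (X ω)) * τ false (X ω))) ∂P
      ≤ C ^ 2 * ((∫ ω, w true (X ω) * L1 ω * (A true).indicator (fun _ => (1 : ℝ)) ω ∂P)
            / p true
          + (∫ ω, w false (X ω) * L0 ω * (A false).indicator (fun _ => (1 : ℝ)) ω ∂P)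
            / p false
          + (∫ ω, w true (X ω) * L10 ω * (A true).indicator (fun _ => (1 : ℝ)) ω ∂P)
            / p true
          + (∫ ω, w false (X ω) * L01 ω * (A false).indicator (fun _ => (1 : ℝ)) ω ∂P)
            / p false
          + (lam1 + lam10) * Δ true + (lam0 + lam01) * Δ false
          + variance L1 P / (4 * lam1) + variance L0 P / (4 * lam0)
          + variance L10 P / (4 * lam10) + variance L01 P / (4 * lam01)) := by
  have hS : ∀ b, MeasurableSet (A b) := by subst hA; exact fun b => hT (measurableSet_singleton b)
  have hXm' : Measurable[MeasurableSpace.comap (fun ω => (X ω, U ω)) inferInstance] X :=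
    measurable_fst.comp (comap_measurable _)
  have hXb : ∀ b, Measurable[MeasurableSpace.comap (fun ω => (X ω, U ω)) inferInstance
        ⊔ MeasurableSpace.comap (Y b) inferInstance] X :=
    fun b => hXm'.mono le_sup_left le_rfl
  have hYb : ∀ b, Measurable[MeasurableSpace.comap (fun ω => (X ω, U ω)) inferInstance
        ⊔ MeasurableSpace.comap (Y b) inferInstance] (Y b) :=
    fun b => (comap_measurable (Y b)).mono le_sup_right le_rfl
  have bound : ∀ b (L : Ω → ℝ) {lam : ℝ}, 0 < lam →
      Measurable[MeasurableSpace.comap (fun ω => (X ω, U ω)) inferInstance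
        ⊔ MeasurableSpace.comap (Y b) inferInstance] L →
      MemLp L 2 P →
      ∫ ω, L ω ∂P ≤ (∫ ω, w b (X ω) * L ω * (A b).indicator (fun _ => (1 : ℝ)) ω ∂P) / p b
        + lam * Δ b + variance L P / (4 * lam) := fun b L _ hlam hLm hL => by
    rw [hΔ b, heps b]
    exact integral_le_weighted_integral_add_chiSq_add_variance (hS b) (hY b) (hind b)
      ((hwm b).comp hXm') (ae_of_all _ fun ω => by simpa [abs_of_nonneg (hw0 b _)] using hwb b _)
      hLm hL (hw1 b) (heps b ▸ hΔfin b) hlam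
  have hL1b := bound true L1 hlam1 (by rw [hL1]; fun_prop) hL1sq
  have hL0b := bound false L0 hlam0 (by rw [hL0]; fun_prop) hL0sq
  have hL10b := bound true L10 hlam10 (by rw [hL10]; fun_prop) hL10sq
  have hL01b := bound false L01 hlam01 (by rw [hL01]; fun_prop) hL01sq
  subst hL1 hL0 hL10 hL01
  refine (le_of_eq ?_).trans ((integral_comp_sub_sub_add_le hC.le hψ0 hadd hsub
    (hL1sq.integrable one_le_two) (hL0sq.integrable one_le_two) (hL10sq.integrable one_le_two)
    (hL01sq.integrable one_le_two)).trans (mul_le_mul_of_nonneg_left (by linarith) (sq_nonneg C)))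
  exact integral_congr_ae (ae_of_all _ fun ω => by beta_reduce; congr 1; ring)

/-- upper bound on the X-learner loss in expectation, Proposition 5
of the paper. The treatment `T : Ω → {0,1}` is encoded as `T : Ω → Bool`
(`true ↔ a = 1`); `A b = {T = b}`, `p b = P(T = b) > 0`, `eps b = P[T=b | σ(X,U)]` is the
true propensity, each potential outcome `Y b` is conditionally independent of `1_{T=b}`
given `σ(X,U)`, `ψ ≥ 0` satisfies `ψ(x ± y) ≤ C(ψ(x)+ψ(y))`, `e : 𝓧 → ℝ` is the
X-learner weighting function, `τ¹, τ⁰` the pseudo-effect regressions, the weights satisfy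
`E[w b (X) | T=b] = 1`, the four component losses `L₁, L₀, L₁₀, L₀₁` are
square-integrable, and `Δ b = E[(w b (X)·eps b / p b − 1)²] < ∞`. Then for all
`λ₁, λ₀, λ₁₀, λ₀₁ > 0` the stated bound holds. -/
theorem stmt_13 {Ω 𝓧 𝓤 : Type*} [MeasurableSpace Ω] [StandardBorelSpace Ω]
    [MeasurableSpace 𝓧] [MeasurableSpace 𝓤]
    (P : Measure Ω) [IsProbabilityMeasure P]
    (X : Ω → 𝓧) (U : Ω → 𝓤) (Y : Bool → Ω → ℝ)
    (hX : Measurable X) (hU : Measurable U) (hY : ∀ b, Measurable (Y b))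
    (T : Ω → Bool) (hT : Measurable T)
    (A : Bool → Set Ω) (hA : A = fun b => {ω | T ω = b})
    (p : Bool → ℝ) (hp : ∀ b, p b = (P (A b)).toReal) (hppos : ∀ b, 0 < p b)
    (eps : Bool → Ω → ℝ)
    (heps : ∀ b, eps b = P[(A b).indicator (fun _ => (1 : ℝ)) |
      MeasurableSpace.comap (fun ω => (X ω, U ω)) inferInstance])
    (hind : ∀ b, CondIndepFun (MeasurableSpace.comap (fun ω => (X ω, U ω)) inferInstance)
      ((hX.prodMk hU).comap_le) (Y b) ((A b).indicator fun _ => (1 : ℝ)) P)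
    (ψ : ℝ → ℝ) (hψ0 : ∀ x, 0 ≤ ψ x) (hψm : Measurable ψ)
    (C : ℝ) (hC : 0 < C)
    (hadd : ∀ x y : ℝ, ψ (x + y) ≤ C * (ψ x + ψ y))
    (hsub : ∀ x y : ℝ, ψ (x - y) ≤ C * (ψ x + ψ y))
    (h : Bool → 𝓧 → ℝ) (hh : ∀ b, Measurable (h b))
    (τ : Bool → 𝓧 → ℝ) (hτ : ∀ b, Measurable (τ b))
    (e : 𝓧 → ℝ) (he : Measurable e)
    (w : Bool → 𝓧 → ℝ) (hwm : ∀ b, Measurable (w b)) (hw0 : ∀ b x, 0 ≤ w b x)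
    (Cw : ℝ) (hwb : ∀ b x, w b x ≤ Cw)
    (hw1 : ∀ b, (∫ ω, w b (X ω) * (A b).indicator (fun _ => (1 : ℝ)) ω ∂P) / p b = 1)
    (L1 L0 L10 L01 : Ω → ℝ)
    (hL1 : L1 = fun ω => ψ ((1 - e (X ω)) * (Y true ω - h true (X ω))))
    (hL0 : L0 = fun ω => ψ (e (X ω) * (Y false ω - h false (X ω))))
    (hL10 : L10 = fun ω => ψ (e (X ω) * (τ true (X ω) - (Y true ω - h false (X ω)))))
    (hL01 : L01 = fun ω => ψ ((1 - e (X ω)) * (τ false (X ω) - (h true (X ω) - Y false ω))))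
    (hL1sq : MemLp L1 2 P) (hL0sq : MemLp L0 2 P)
    (hL10sq : MemLp L10 2 P) (hL01sq : MemLp L01 2 P)
    (Δ : Bool → ℝ) (hΔ : ∀ b, Δ b = ∫ ω, (w b (X ω) * eps b ω / p b - 1) ^ 2 ∂P)
    (hΔfin : ∀ b, Integrable (fun ω => (w b (X ω) * eps b ω / p b - 1) ^ 2) P)
    (lam1 lam0 lam10 lam01 : ℝ)
    (hlam1 : 0 < lam1) (hlam0 : 0 < lam0) (hlam10 : 0 < lam10) (hlam01 : 0 < lam01) :
    ∫ ω, ψ (Y true ω - Y false ω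
        - (e (X ω) * τ true (X ω) + (1 - e (X ω)) * τ false (X ω))) ∂P
      ≤ C ^ 2 * ((∫ ω, w true (X ω) * L1 ω * (A true).indicator (fun _ => (1 : ℝ)) ω ∂P)
            / p true
          + (∫ ω, w false (X ω) * L0 ω * (A false).indicator (fun _ => (1 : ℝ)) ω ∂P)
            / p false
          + (∫ ω, w true (X ω) * L10 ω * (A true).indicator (fun _ => (1 : ℝ)) ω ∂P)
            / p true
          + (∫ ω, w false (X ω) * L01 ω * (A false).indicator (fun _ => (1 : ℝ)) ω ∂P)
            / p false
          + (lam1 + lam10) * Δ true + (lam0 + lam01) * Δ false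
          + variance L1 P / (4 * lam1) + variance L0 P / (4 * lam0)
          + variance L10 P / (4 * lam10) + variance L01 P / (4 * lam01)) :=
  stmt_13_general P X U Y hX hU hY T hT A hA p eps heps hind ψ hψ0 hψm C hC hadd hsub h hh τ hτ e he
    w hwm hw0 Cw hwb hw1 L1 L0 L10 L01 hL1 hL0 hL10 hL01 hL1sq hL0sq hL10sq hL01sq Δ hΔ hΔfin lam1
    lam0 lam10 lam01 hlam1 hlam0 hlam10 hlam01
end

section
/- On a probability space (Ω, F, P), let X : Ω → 𝒳, U : Ω → 𝒰, and Y : Ω → ℝ be measurable random variables, let A ∈ F be an event with p := P(A) > 0, let e := E[1_A | σ(X,U)], and assume Y and 1_A are conditionally independent given σ(X,U). Let ℓ : ℝ × ℝ → [0, M] be a measurable loss bounded by M > 0, h : 𝒳 → ℝ measurable, and w : 𝒳 → [0,∞) a bounded measurable weight with E[w(X) | A] = 1. Write L := ℓ(Y, h(X)) and assume Δ := E[(w(X)·e/p − 1)²] < ∞. Then for every λ > 0, E[L] ≤ E[w(X)·L | A] + λ·Δ + M²/(16λ). -/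
/-!
Conditional independence of `Y` and `1_A` given `m = σ(X, U)` says that on `σ(Y) ∨ m` the
measure `P` restricted to `A` has density `e = P[1_A | m]` with respect to `P`; hence
`E[G(Y, X, U) 1_A] = E[G(Y, X, U) e]` for every measurable `G`. With `φ = w(X) e / p` this turns
`E[w(X) L | A]` into `E[L φ]` and the normalisation of `w` into `E[φ] = 1`. The bound then
follows by integrating the pointwise inequality
`L (1 - φ) ≤ M/2 (1 - φ) + λ (1 - φ)² + M²/(16 λ)` for `0 ≤ L ≤ M`, whose centring term
`M/2 (1 - φ)` integrates to zero.
-/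

open MeasureTheory ProbabilityTheory

lemma mul_le_half_mul_add_mul_sq_add {L M t lam : ℝ} (hL : L ∈ Set.Icc 0 M) (hlam : 0 < lam) :
    L * t ≤ M / 2 * t + lam * t ^ 2 + M ^ 2 / (16 * lam) := by
  -- `L (M - L) ≥ 0` is Popoviciu's bound `(L - M/2)² ≤ M²/4`; the rest is a completed square.
  have hspread : 0 ≤ L * (M - L) := mul_nonneg hL.1 (sub_nonneg.2 hL.2)
  have hsq : M / 2 * t + lam * t ^ 2 + M ^ 2 / (16 * lam) - L * t
      = ((4 * lam * t - (2 * L - M)) ^ 2 + 4 * (L * (M - L))) / (16 * lam) := by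
    field_simp
    ring
  rw [← sub_nonneg, hsq]
  positivity

lemma integral_le_integral_mul_add {Ω : Type*} [MeasurableSpace Ω] {μ : Measure Ω}
    [IsProbabilityMeasure μ] {L φ : Ω → ℝ} {M lam : ℝ} (hL : AEStronglyMeasurable L μ)
    (hLM : ∀ ω, L ω ∈ Set.Icc 0 M) (hφ : AEStronglyMeasurable φ μ) (hφ1 : ∫ ω, φ ω ∂μ = 1)
    (hΔ : Integrable (fun ω => (φ ω - 1) ^ 2) μ) (hlam : 0 < lam) :
    ∫ ω, L ω ∂μ ≤ ∫ ω, L ω * φ ω ∂μ + lam * ∫ ω, (φ ω - 1) ^ 2 ∂μ + M ^ 2 / (16 * lam) := by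
  have hφint : Integrable φ μ := by
    have : MemLp (fun ω => φ ω - 1) 2 μ :=
      (memLp_two_iff_integrable_sq (hφ.sub aestronglyMeasurable_const)).2 hΔ
    exact integrable_add_const_iff.1
      (by simpa only [sub_eq_add_neg] using this.integrable one_le_two)
  have hLbdd : ∀ ω, ‖L ω‖ ≤ M := fun ω => by
    rw [Real.norm_eq_abs, abs_of_nonneg (hLM ω).1]; exact (hLM ω).2
  have hLint : Integrable L μ := .of_bound hL M (.of_forall hLbdd)
  have hLφint : Integrable (fun ω => L ω * φ ω) μ := hφint.bdd_mul hL (.of_forall hLbdd)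
  have hpt : ∀ ω, L ω ≤ L ω * φ ω + lam * (φ ω - 1) ^ 2 + M / 2 * (1 - φ ω)
      + M ^ 2 / (16 * lam) := fun ω => by
    have := mul_le_half_mul_add_mul_sq_add (t := 1 - φ ω) (hLM ω) hlam
    linarith
  have hint : Integrable (fun ω => L ω * φ ω + lam * (φ ω - 1) ^ 2) μ :=
    hLφint.add (hΔ.const_mul lam)
  have hcentre : Integrable (fun ω => M / 2 * (1 - φ ω)) μ :=
    ((integrable_const 1).sub hφint).const_mul _
  have hsum : Integrable
      (fun ω => L ω * φ ω + lam * (φ ω - 1) ^ 2 + M / 2 * (1 - φ ω)) μ :=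
    hint.add hcentre
  calc ∫ ω, L ω ∂μ
      ≤ ∫ ω, (L ω * φ ω + lam * (φ ω - 1) ^ 2 + M / 2 * (1 - φ ω) + M ^ 2 / (16 * lam)) ∂μ :=
        integral_mono hLint (hsum.add (integrable_const _)) hpt
    _ = ∫ ω, L ω * φ ω ∂μ + lam * ∫ ω, (φ ω - 1) ^ 2 ∂μ + M / 2 * (1 - ∫ ω, φ ω ∂μ)
          + M ^ 2 / (16 * lam) := by
        rw [integral_add hsum (integrable_const _), integral_add hint hcentre,
          integral_add hLφint (hΔ.const_mul lam), integral_const_mul, integral_const_mul,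
          integral_sub (integrable_const 1) hφint]
        simp
    _ = ∫ ω, L ω * φ ω ∂μ + lam * ∫ ω, (φ ω - 1) ^ 2 ∂μ + M ^ 2 / (16 * lam) := by
        rw [hφ1]; ring

lemma condExp_indicator_one_nonneg {Ω : Type*} {m mΩ : MeasurableSpace Ω} {μ : Measure Ω}
    {A : Set Ω} : 0 ≤ᵐ[μ] μ⟦A | m⟧ :=
  condExp_nonneg (.of_forall (Set.indicator_nonneg fun _ _ => zero_le_one))

section CondIndepIndicator

variable {Ω β γ : Type*} {m mΩ : MeasurableSpace Ω} [StandardBorelSpace Ω] {hm : m ≤ mΩ}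
  {μ : Measure Ω} [IsFiniteMeasure μ] [MeasurableSpace β] [MeasurableSpace γ]
  {Y : Ω → β} {A : Set Ω}

lemma measureReal_preimage_inter_inter_eq_setIntegral_condExp
    (hind : CondIndepFun m hm Y (A.indicator fun _ => (1 : ℝ)) μ) (hY : Measurable Y)
    (hA : MeasurableSet A) {s : Set β} (hs : MeasurableSet s) {T : Set Ω}
    (hT : MeasurableSet[m] T) :
    μ.real (Y ⁻¹' s ∩ T ∩ A) = ∫ ω in Y ⁻¹' s ∩ T, (μ⟦A | m⟧) ω ∂μ := by
  set S := Y ⁻¹' s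
  have hS : MeasurableSet S := hY hs
  have hA1 : (A.indicator fun _ => (1 : ℝ)) ⁻¹' {1} = A := by
    ext ω; by_cases hω : ω ∈ A <;> simp [hω]
  have hprod : μ⟦S ∩ A | m⟧ =ᵐ[μ] fun ω => (μ⟦S | m⟧) ω * (μ⟦A | m⟧) ω := by
    simpa only [hA1] using (condIndepFun_iff_condExp_inter_preimage_eq_mul hY
      (measurable_const.indicator hA)).1 hind s {1} hs (measurableSet_singleton 1)
  have hSA : Integrable (S.indicator fun _ => (1 : ℝ)) μ := (integrable_const 1).indicator hS
  have hSe_eq : (S.indicator fun _ => (1 : ℝ)) * μ⟦A | m⟧ = S.indicator (μ⟦A | m⟧) := by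
    ext ω; by_cases hω : ω ∈ S <;> simp [hω]
  have hSe : Integrable ((S.indicator fun _ => (1 : ℝ)) * μ⟦A | m⟧) μ :=
    hSe_eq ▸ integrable_condExp.indicator hS
  have hpull : μ[(S.indicator fun _ => (1 : ℝ)) * μ⟦A | m⟧ | m] =ᵐ[μ] μ⟦S | m⟧ * μ⟦A | m⟧ :=
    condExp_mul_of_stronglyMeasurable_right stronglyMeasurable_condExp hSe hSA
  calc μ.real (S ∩ T ∩ A)
      = ∫ ω in T, (S ∩ A).indicator (fun _ => (1 : ℝ)) ω ∂μ := by
        rw [setIntegral_indicator (hS.inter hA), setIntegral_const, smul_eq_mul, mul_one,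
          Set.inter_right_comm, Set.inter_comm T]
    _ = ∫ ω in T, (μ⟦S ∩ A | m⟧) ω ∂μ :=
        (setIntegral_condExp hm ((integrable_const 1).indicator (hS.inter hA)) hT).symm
    _ = ∫ ω in T, μ[(S.indicator fun _ => (1 : ℝ)) * μ⟦A | m⟧ | m] ω ∂μ :=
        setIntegral_congr_ae (hm T hT) ((hprod.trans hpull.symm).mono fun _ h _ => h)
    _ = ∫ ω in T, ((S.indicator fun _ => (1 : ℝ)) * μ⟦A | m⟧) ω ∂μ :=
        setIntegral_condExp hm hSe hT
    _ = ∫ ω in S ∩ T, (μ⟦A | m⟧) ω ∂μ := by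
        rw [hSe_eq, setIntegral_indicator hS, Set.inter_comm]

lemma map_restrict_eq_map_withDensity_condExp_s16
    (hind : CondIndepFun m hm Y (A.indicator fun _ => (1 : ℝ)) μ) (hY : Measurable Y)
    (hA : MeasurableSet A) {W : Ω → γ} (hW : Measurable[m] W) :
    (μ.restrict A).map (fun ω => (Y ω, W ω))
      = (μ.withDensity fun ω => ENNReal.ofReal ((μ⟦A | m⟧) ω)).map (fun ω => (Y ω, W ω)) := by
  have hYW : Measurable fun ω => (Y ω, W ω) := hY.prodMk (hW.mono hm le_rfl)
  refine Measure.ext_prod fun {s t} hs ht => ?_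
  have hWt : MeasurableSet[m] (W ⁻¹' t) := hW ht
  rw [Measure.map_apply hYW (hs.prod ht), Measure.map_apply hYW (hs.prod ht),
    Measure.restrict_apply (hYW (hs.prod ht)), withDensity_apply _ (hYW (hs.prod ht)),
    Set.mk_preimage_prod, ← ofReal_measureReal,
    measureReal_preimage_inter_inter_eq_setIntegral_condExp hind hY hA hs hWt,
    ofReal_integral_eq_lintegral_ofReal integrable_condExp.integrableOn
      (ae_restrict_of_ae condExp_indicator_one_nonneg)]

lemma integral_mul_indicator_eq_integral_mul_condExp
    (hind : CondIndepFun m hm Y (A.indicator fun _ => (1 : ℝ)) μ) (hY : Measurable Y)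
    (hA : MeasurableSet A) {W : Ω → γ} (hW : Measurable[m] W) {G : β × γ → ℝ}
    (hG : Measurable G) :
    ∫ ω, G (Y ω, W ω) * A.indicator (fun _ => (1 : ℝ)) ω ∂μ
      = ∫ ω, G (Y ω, W ω) * (μ⟦A | m⟧) ω ∂μ := by
  have hYW : Measurable fun ω => (Y ω, W ω) := hY.prodMk (hW.mono hm le_rfl)
  have he : Measurable (μ⟦A | m⟧) := (stronglyMeasurable_condExp.mono hm).measurable
  calc ∫ ω, G (Y ω, W ω) * A.indicator (fun _ => (1 : ℝ)) ω ∂μ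
      = ∫ ω in A, G (Y ω, W ω) ∂μ := by
        rw [← integral_indicator hA]
        congr 1 with ω
        by_cases hω : ω ∈ A <;> simp [hω]
    _ = ∫ z, G z ∂(μ.restrict A).map (fun ω => (Y ω, W ω)) :=
        (integral_map hYW.aemeasurable hG.aestronglyMeasurable).symm
    _ = ∫ ω, G (Y ω, W ω) ∂(μ.withDensity fun ω => ENNReal.ofReal ((μ⟦A | m⟧) ω)) := by
        rw [map_restrict_eq_map_withDensity_condExp_s16 hind hY hA hW,
          integral_map hYW.aemeasurable hG.aestronglyMeasurable]
    _ = ∫ ω, G (Y ω, W ω) * (μ⟦A | m⟧) ω ∂μ := by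
        rw [integral_withDensity_eq_integral_toReal_smul he.ennreal_ofReal
          (.of_forall fun _ => ENNReal.ofReal_lt_top)]
        refine integral_congr_ae ?_
        filter_upwards [condExp_indicator_one_nonneg (m := m) (A := A)] with ω hω
        simp [ENNReal.toReal_ofReal hω, mul_comm]

end CondIndepIndicator

theorem stmt_16_general {Ω 𝓧 𝓤 : Type*} [MeasurableSpace Ω] [StandardBorelSpace Ω]
    [MeasurableSpace 𝓧] [MeasurableSpace 𝓤]
    (P : Measure Ω) [IsProbabilityMeasure P]
    (X : Ω → 𝓧) (U : Ω → 𝓤) (Y : Ω → ℝ)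
    (hX : Measurable X) (hU : Measurable U) (hY : Measurable Y)
    (A : Set Ω) (hA : MeasurableSet A)
    (p : ℝ)
    (e : Ω → ℝ)
    (he : e = P[A.indicator (fun _ => (1 : ℝ)) |
      MeasurableSpace.comap (fun ω => (X ω, U ω)) inferInstance])
    (hind : CondIndepFun (MeasurableSpace.comap (fun ω => (X ω, U ω)) inferInstance)
      ((hX.prodMk hU).comap_le) Y (A.indicator fun _ => (1 : ℝ)) P)
    (M : ℝ)
    (ℓ : ℝ × ℝ → ℝ) (hℓm : Measurable ℓ) (hℓ0 : ∀ z, 0 ≤ ℓ z) (hℓM : ∀ z, ℓ z ≤ M)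
    (h : 𝓧 → ℝ) (hh : Measurable h)
    (w : 𝓧 → ℝ) (hwm : Measurable w)
    (hw1 : (∫ ω, w (X ω) * A.indicator (fun _ => (1 : ℝ)) ω ∂P) / p = 1)
    (L : Ω → ℝ) (hL : L = fun ω => ℓ (Y ω, h (X ω)))
    (Δ : ℝ) (hΔ : Δ = ∫ ω, (w (X ω) * e ω / p - 1) ^ 2 ∂P)
    (hΔfin : Integrable (fun ω => (w (X ω) * e ω / p - 1) ^ 2) P)
    (lam : ℝ) (hlam : 0 < lam) :
    ∫ ω, L ω ∂P
      ≤ (∫ ω, w (X ω) * L ω * A.indicator (fun _ => (1 : ℝ)) ω ∂P) / p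
        + lam * Δ + M ^ 2 / (16 * lam) := by
  have hW : Measurable[MeasurableSpace.comap (fun ω => (X ω, U ω)) inferInstance]
      (fun ω => (X ω, U ω)) := comap_measurable _
  have hwX : Measurable fun z : ℝ × 𝓧 × 𝓤 => w z.2.1 :=
    hwm.comp (measurable_fst.comp measurable_snd)
  have hwXL : Measurable fun z : ℝ × 𝓧 × 𝓤 => w z.2.1 * ℓ (z.1, h z.2.1) :=
    hwX.mul (hℓm.comp (measurable_fst.prodMk (hh.comp (measurable_fst.comp measurable_snd))))
  have hφ1 : ∫ ω, w (X ω) * e ω / p ∂P = 1 := by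
    rw [integral_div, he,
      ← integral_mul_indicator_eq_integral_mul_condExp hind hY hA hW hwX, hw1]
  have hLφ : ∫ ω, L ω * (w (X ω) * e ω / p) ∂P
      = (∫ ω, w (X ω) * L ω * A.indicator (fun _ => (1 : ℝ)) ω ∂P) / p := by
    rw [hL, integral_mul_indicator_eq_integral_mul_condExp hind hY hA hW hwXL,
      ← integral_div, he]
    congr 1 with ω
    ring
  have hLM : ∀ ω, L ω ∈ Set.Icc 0 M := fun ω => hL ▸ ⟨hℓ0 _, hℓM _⟩
  have he_meas : Measurable e :=
    he ▸ (stronglyMeasurable_condExp.mono (hX.prodMk hU).comap_le).measurable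
  have hφ : AEStronglyMeasurable (fun ω => w (X ω) * e ω / p) P :=
    (((hwm.comp hX).mul he_meas).div_const p).aestronglyMeasurable
  have hLm : AEStronglyMeasurable L P := by
    rw [hL]; exact (hℓm.comp (hY.prodMk (hh.comp hX))).aestronglyMeasurable
  simpa only [hLφ, hΔ] using integral_le_integral_mul_add hLm hLM hφ hφ1 hΔfin hlam

/-- population-level inequality behind the PAC bound for outcome
regression. Under conditional independence of `Y` and `1_A` given `σ(X,U)`, for a
measurable loss `ℓ` with values in `[0, M]` (`M > 0`), measurable `h`, and a bounded
nonnegative weight `w` with `E[w(X) | A] = 1`, writing `L = ℓ(Y, h(X))` and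
`Δ = E[(w(X)·e/p − 1)²] < ∞`, for every `λ > 0` we have
`E[L] ≤ E[w(X)·L | A] + λ·Δ + M²/(16λ)`. -/
theorem stmt_16 {Ω 𝓧 𝓤 : Type*} [MeasurableSpace Ω] [StandardBorelSpace Ω]
    [MeasurableSpace 𝓧] [MeasurableSpace 𝓤]
    (P : Measure Ω) [IsProbabilityMeasure P]
    (X : Ω → 𝓧) (U : Ω → 𝓤) (Y : Ω → ℝ)
    (hX : Measurable X) (hU : Measurable U) (hY : Measurable Y)
    (A : Set Ω) (hA : MeasurableSet A)
    (p : ℝ) (hp : p = (P A).toReal) (hppos : 0 < p)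
    (e : Ω → ℝ)
    (he : e = P[A.indicator (fun _ => (1 : ℝ)) |
      MeasurableSpace.comap (fun ω => (X ω, U ω)) inferInstance])
    (hind : CondIndepFun (MeasurableSpace.comap (fun ω => (X ω, U ω)) inferInstance)
      ((hX.prodMk hU).comap_le) Y (A.indicator fun _ => (1 : ℝ)) P)
    (M : ℝ) (hM : 0 < M)
    (ℓ : ℝ × ℝ → ℝ) (hℓm : Measurable ℓ) (hℓ0 : ∀ z, 0 ≤ ℓ z) (hℓM : ∀ z, ℓ z ≤ M)
    (h : 𝓧 → ℝ) (hh : Measurable h)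
    (w : 𝓧 → ℝ) (hwm : Measurable w) (hw0 : ∀ x, 0 ≤ w x) (Cw : ℝ) (hwb : ∀ x, w x ≤ Cw)
    (hw1 : (∫ ω, w (X ω) * A.indicator (fun _ => (1 : ℝ)) ω ∂P) / p = 1)
    (L : Ω → ℝ) (hL : L = fun ω => ℓ (Y ω, h (X ω)))
    (Δ : ℝ) (hΔ : Δ = ∫ ω, (w (X ω) * e ω / p - 1) ^ 2 ∂P)
    (hΔfin : Integrable (fun ω => (w (X ω) * e ω / p - 1) ^ 2) P)
    (lam : ℝ) (hlam : 0 < lam) :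
    ∫ ω, L ω ∂P
      ≤ (∫ ω, w (X ω) * L ω * A.indicator (fun _ => (1 : ℝ)) ω ∂P) / p
        + lam * Δ + M ^ 2 / (16 * lam) :=
  stmt_16_general P X U Y hX hU hY A hA p e he hind M ℓ hℓm hℓ0 hℓM h hh w hwm hw1 L hL Δ hΔ hΔfin
    lam hlam
end
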